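/- arXiv:2001.11341 — 15 statements merged into one kernel-verified Lean document; each statement's English description precedes it below -/
import Mathlib

section
/- Let W be a tournament and ≻ a ranking on a finite set X. If a ranking R is W-efficient, then R is W-unimprovable: there is no W-feasible ranking R' distinct from R that is more aligned with ≻ than R. -/
variable {X : Type*}

def Tournament (W : X → X → Prop) : Prop :=
  (∀ x y : X, x ≠ y → W x y ∨ W y x) ∧ (∀ x y : X, W x y → ¬ W y x)

def Ranking (R : X → X → Prop) : Prop :=
  (∀ x : X, ¬ R x x) ∧ (∀ x y z : X, R x y → R y z → R x z) ∧
    (∀ x y : X, x ≠ y → R x y ∨ R y x)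

def ProtoRanking (R : X → X → Prop) : Prop :=
  (∀ x : X, ¬ R x x) ∧ (∀ x y z : X, R x y → R y z → R x z)

def Adjacent (R : X → X → Prop) (x y : X) : Prop :=
  R x y ∧ ¬ ∃ z : X, R x z ∧ R z y

def Feasible (W R : X → X → Prop) : Prop :=
  ∀ x y : X, Adjacent R x y → W x y

def Efficient (succ W R : X → X → Prop) : Prop :=
  ∀ x y : X, succ x y → W x y → R x y

def MoreAligned (succ R R' : X → X → Prop) : Prop :=
  ∀ x y : X, succ x y → R' x y → R x y

/-- A W-efficient ranking is W-unimprovable. -/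
theorem stmt1 [Fintype X] (W succ R : X → X → Prop)
    (hW : Tournament W) (hsucc : Ranking succ) (hR : Ranking R)
    (hEff : Efficient succ W R) :
    ¬ ∃ R' : X → X → Prop, Ranking R' ∧ Feasible W R' ∧ R' ≠ R ∧
      MoreAligned succ R' R := by
  classical
  rintro ⟨R', hR', hFeas, hne, hMA⟩
  obtain ⟨hR'irr, hR'tr, hR'tot⟩ := hR'
  obtain ⟨hRirr, hRtr, hRtot⟩ := hR
  -- R is asymmetric
  have hRasym : ∀ a b, R a b → ¬ R b a := fun a b hab hba => hRirr a (hRtr a b a hab hba)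
  have hR'asym : ∀ a b, R' a b → ¬ R' b a := fun a b hab hba => hR'irr a (hR'tr a b a hab hba)
  -- every R'-adjacent pair is R-ordered the same way
  have hAdj : ∀ a b, Adjacent R' a b → R a b := by
    intro a b hadj
    have hab : R' a b := hadj.1
    have hneab : a ≠ b := fun h => hR'irr a (h ▸ hab)
    have hWab : W a b := hFeas a b hadj
    rcases hsucc.2.2 a b hneab with hs | hs
    · exact hEff a b hs hWab
    · rcases hRtot a b hneab with h | h
      · exact h
      · exact absurd (hMA b a hs h) (hR'asym a b hab)
  -- chain decomposition: R' ⊆ R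
  have hsub : ∀ a b, R' a b → R a b := by
    have main : ∀ n a b,
        (Finset.univ.filter (fun z => R' a z ∧ R' z b)).card = n → R' a b → R a b := by
      intro n
      induction n using Nat.strong_induction_on with
      | _ n ih =>
        intro a b hcard hab
        by_cases hmid : ∃ z, R' a z ∧ R' z b
        · obtain ⟨z, haz, hzb⟩ := hmid
          have hsub1 : (Finset.univ.filter (fun w => R' a w ∧ R' w z)) ⊂
              (Finset.univ.filter (fun w => R' a w ∧ R' w b)) := by
            constructor
            · intro w hw
              simp only [Finset.mem_filter, Finset.mem_univ, true_and] at hw ⊢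
              exact ⟨hw.1, hR'tr w z b hw.2 hzb⟩
            · intro hcon
              have hz : z ∈ Finset.univ.filter (fun w => R' a w ∧ R' w b) := by
                simp only [Finset.mem_filter, Finset.mem_univ, true_and]
                exact ⟨haz, hzb⟩
              have := hcon hz
              simp only [Finset.mem_filter, Finset.mem_univ, true_and] at this
              exact hR'irr z this.2
          have hsub2 : (Finset.univ.filter (fun w => R' z w ∧ R' w b)) ⊂
              (Finset.univ.filter (fun w => R' a w ∧ R' w b)) := by
            constructor
            · intro w hw
              simp only [Finset.mem_filter, Finset.mem_univ, true_and] at hw ⊢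
              exact ⟨hR'tr a z w haz hw.1, hw.2⟩
            · intro hcon
              have hz : z ∈ Finset.univ.filter (fun w => R' a w ∧ R' w b) := by
                simp only [Finset.mem_filter, Finset.mem_univ, true_and]
                exact ⟨haz, hzb⟩
              have := hcon hz
              simp only [Finset.mem_filter, Finset.mem_univ, true_and] at this
              exact hR'irr z this.1
          have h1 : R a z := ih _ (hcard ▸ Finset.card_lt_card hsub1) a z rfl haz
          have h2 : R z b := ih _ (hcard ▸ Finset.card_lt_card hsub2) z b rfl hzb
          exact hRtr a z b h1 h2
        · exact hAdj a b ⟨hab, hmid⟩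
    intro a b hab
    exact main _ a b rfl hab
  -- hence R' = R
  apply hne
  funext a b
  ext
  constructor
  · exact hsub a b
  · intro hab
    have hneab : a ≠ b := fun h => hRirr a (h ▸ hab)
    rcases hR'tot a b hneab with h | h
    · exact h
    · exact absurd (hsub b a h) (hRasym a b hab)
end

section
/- For every tournament W and every ranking ≻ on a finite set X, there exists a ranking R that is both W-feasible and W-efficient. -/
variable {X : Type*}

open Classical in
/-- Number of ordered pairs on which `R` agrees with `W`. -/
noncomputable def alignCard [Fintype X] (W R : X → X → Prop) : ℕ :=
  (Finset.univ.filter (fun p : X × X => R p.1 p.2 ∧ W p.1 p.2)).card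

/-- Every tournament admits a ranking that is both W-feasible and W-efficient. -/
theorem stmt2 [Fintype X] (W succ : X → X → Prop)
    (hW : Tournament W) (hsucc : Ranking succ) :
    ∃ R : X → X → Prop, Ranking R ∧ Feasible W R ∧ Efficient succ W R := by
  classical
  have bound : ∀ R : X → X → Prop, alignCard W R ≤ Fintype.card (X × X) := by
    intro R
    exact (Finset.card_filter_le Finset.univ
      (fun p : X × X => R p.1 p.2 ∧ W p.1 p.2)).trans_eq Finset.card_univ
  -- key step: an efficient non-feasible ranking can be improved by one adjacent swap
  have key : ∀ R : X → X → Prop, Ranking R → Efficient succ W R → ¬ Feasible W R →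
      ∃ R', Ranking R' ∧ Efficient succ W R' ∧ alignCard W R < alignCard W R' := by
    intro R hR hE hF
    obtain ⟨hirr, htr, htot⟩ := hR
    have hasym : ∀ a b : X, R a b → ¬ R b a := fun a b hab hba => hirr a (htr a b a hab hba)
    rw [Feasible] at hF
    push_neg at hF
    obtain ⟨x, y, hadj, hWxy⟩ := hF
    obtain ⟨hRxy, hnomid⟩ := hadj
    have hxy : x ≠ y := fun h => hirr x (h ▸ hRxy)
    have hWyx : W y x := (hW.1 y x (Ne.symm hxy)).resolve_right hWxy
    -- the swapped relation
    set R' : X → X → Prop := fun a b => (R a b ∧ ¬ (a = x ∧ b = y)) ∨ (a = y ∧ b = x)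
      with hR'def
    have hR'irr : ∀ a : X, ¬ R' a a := by
      rintro a (⟨h, _⟩ | ⟨h1, h2⟩)
      · exact hirr a h
      · exact hxy (h2 ▸ h1 ▸ rfl)
    have hR'tot : ∀ a b : X, a ≠ b → R' a b ∨ R' b a := by
      intro a b hab
      by_cases h1 : a = x ∧ b = y
      · exact Or.inr (Or.inr ⟨h1.2, h1.1⟩)
      by_cases h2 : b = x ∧ a = y
      · exact Or.inl (Or.inr ⟨h2.2, h2.1⟩)
      rcases htot a b hab with h | h
      · exact Or.inl (Or.inl ⟨h, h1⟩)
      · exact Or.inr (Or.inl ⟨h, fun hh => h2 ⟨hh.1, hh.2⟩⟩)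
    have hR'tr : ∀ a b c : X, R' a b → R' b c → R' a c := by
      rintro a b c (⟨hab, hab'⟩ | ⟨ha, hb⟩) (⟨hbc, hbc'⟩ | ⟨hb', hc'⟩)
      · -- both old
        refine Or.inl ⟨htr a b c hab hbc, ?_⟩
        rintro ⟨rfl, rfl⟩
        exact hnomid ⟨b, hab, hbc⟩
      · -- old then swap: b = y, c = x
        have hax : a ≠ x := fun h => hab' ⟨h, hb'⟩
        have hac : a ≠ c := fun h => hax (h.trans hc')
        rcases htot a c hac with h | h
        · exact Or.inl ⟨h, fun hh => hax hh.1⟩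
        · refine absurd ⟨a, ?_, ?_⟩ hnomid
          · rw [← hc']; exact h
          · rw [← hb']; exact hab
      · -- swap then old: a = y, b = x
        have hcy : c ≠ y := fun h => hbc' ⟨hb, h⟩
        have hac : a ≠ c := fun h => hcy (h.symm.trans ha)
        rcases htot a c hac with h | h
        · exact Or.inl ⟨h, fun hh => hxy (hh.1.symm.trans ha)⟩
        · refine absurd ⟨c, ?_, ?_⟩ hnomid
          · rw [← hb]; exact hbc
          · rw [← ha]; exact h
      · -- impossible: x = y
        exact absurd (hb.symm.trans hb') hxy
    have hR'E : Efficient succ W R' := by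
      intro a b hs hw
      refine Or.inl ⟨hE a b hs hw, ?_⟩
      rintro ⟨rfl, rfl⟩
      exact hWxy hw
    refine ⟨R', ⟨hR'irr, hR'tr, hR'tot⟩, hR'E, ?_⟩
    -- alignment strictly increases
    apply Finset.card_lt_card
    constructor
    · intro p hp
      simp only [Finset.mem_filter, Finset.mem_univ, true_and] at hp ⊢
      refine ⟨Or.inl ⟨hp.1, ?_⟩, hp.2⟩
      rintro ⟨h1, h2⟩
      exact hWxy (h1 ▸ h2 ▸ hp.2)
    · intro hsub
      have : ((y, x) : X × X) ∈ Finset.univ.filter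
          (fun p : X × X => R p.1 p.2 ∧ W p.1 p.2) := by
        apply hsub
        simp only [Finset.mem_filter, Finset.mem_univ, true_and]
        exact ⟨Or.inr ⟨rfl, rfl⟩, hWyx⟩
      simp only [Finset.mem_filter, Finset.mem_univ, true_and] at this
      exact hasym x y hRxy this.1
  suffices h : ∀ k (R : X → X → Prop), Ranking R → Efficient succ W R →
      Fintype.card (X × X) - alignCard W R ≤ k →
      ∃ R', Ranking R' ∧ Feasible W R' ∧ Efficient succ W R' from
    h (Fintype.card (X × X)) succ hsucc (fun x y h _ => h) (Nat.sub_le _ _)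
  intro k
  induction k with
  | zero =>
    intro R hR hE hle
    by_cases hF : Feasible W R
    · exact ⟨R, hR, hF, hE⟩
    · obtain ⟨R', _, _, hlt⟩ := key R hR hE hF
      have := bound R'
      omega
  | succ k ih =>
    intro R hR hE hle
    by_cases hF : Feasible W R
    · exact ⟨R, hR, hF, hE⟩
    · obtain ⟨R', hR', hE', hlt⟩ := key R hR hE hF
      have := bound R'
      exact ih R' hR' hE' (by omega)
end

section
/- For rankings ≻, R, R' on a finite set X, the following are equivalent: (1) R is more aligned with ≻ than R' (for every pair with x ≻ y, x R' y implies x R y); (2) for every nonempty subset S of X, the R-maximum element of S is equal to or ≻-better than the R'-maximum element of S. -/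
variable {X : Type*}

/-- Characterisation of "more aligned with ≻ than" via maxima of subsets. -/
theorem stmt3 [Fintype X] [DecidableEq X] (succ R R' : X → X → Prop)
    (hsucc : Ranking succ) (hR : Ranking R) (hR' : Ranking R') :
    MoreAligned succ R R' ↔
      ∀ S : Finset X, S.Nonempty → ∀ m m' : X, m ∈ S → m' ∈ S →
        (∀ s ∈ S, s ≠ m → R m s) → (∀ s ∈ S, s ≠ m' → R' m' s) →
        (m = m' ∨ succ m m') := by
  obtain ⟨hs1, hs2, hs3⟩ := hsucc
  obtain ⟨hr1, hr2, hr3⟩ := hR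
  obtain ⟨hr1', hr2', hr3'⟩ := hR'
  constructor
  · intro hMA S hS m m' hm hm' hmax hmax'
    by_cases hmm : m = m'
    · exact Or.inl hmm
    · right
      by_contra hns
      have hsm : succ m' m := (hs3 m' m (Ne.symm hmm)).resolve_right hns
      have hR'm : R' m' m := hmax' m hm hmm
      have hRm : R m' m := hMA m' m hsm hR'm
      have hRm2 : R m m' := hmax m' hm' (Ne.symm hmm)
      exact hr1 m (hr2 m m' m hRm2 hRm)
  · intro h x y hxy hR'xy
    have hne : x ≠ y := by rintro rfl; exact hs1 x hxy
    by_contra hnR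
    have hRyx : R y x := (hr3 x y hne).resolve_left hnR
    have : y = x ∨ succ y x := by
      apply h {x, y} ⟨x, by simp⟩ y x (by simp) (by simp)
      · intro s hs hsne
        simp only [Finset.mem_insert, Finset.mem_singleton] at hs
        rcases hs with rfl | rfl
        · exact hRyx
        · exact absurd rfl hsne
      · intro s hs hsne
        simp only [Finset.mem_insert, Finset.mem_singleton] at hs
        rcases hs with rfl | rfl
        · exact absurd rfl hsne
        · exact hR'xy
    rcases this with rfl | hsyx
    · exact hne rfl
    · exact hs1 x (hs2 x y x hxy hsyx)
end

section
/- A binary relation Q on a set A admits a complete and transitive extension if and only if Q is Suzumura-consistent, i.e., whenever a_1 Q a_2 Q ... Q a_K, either a_1 Q a_K or it is not the case that a_K Q a_1. (Here an extension Q' of Q satisfies Q ⊆ Q' and the strict part of Q is contained in the strict part of Q'.) -/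
def StrictPart {A : Type*} (Q : A → A → Prop) (a b : A) : Prop := Q a b ∧ ¬ Q b a

def HasCompleteTransitiveExtension {A : Type*} (Q : A → A → Prop) : Prop :=
  ∃ Q' : A → A → Prop,
    (∀ a : A, Q' a a) ∧ (∀ a b : A, a ≠ b → Q' a b ∨ Q' b a) ∧
    (∀ a b c : A, Q' a b → Q' b c → Q' a c) ∧
    (∀ a b : A, Q a b → Q' a b) ∧
    (∀ a b : A, StrictPart Q a b → StrictPart Q' a b)

def SuzumuraConsistent {A : Type*} (Q : A → A → Prop) : Prop :=
  ∀ a b : A, Relation.TransGen Q a b → (Q a b ∨ ¬ (Q b a ∧ ¬ Q a b))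

/-- Suzumura's extension theorem. -/
theorem stmt6 {A : Type*} [Fintype A] (Q : A → A → Prop) :
    HasCompleteTransitiveExtension Q ↔ SuzumuraConsistent Q := by
  constructor
  · rintro ⟨Q', _hrefl, _htot, htrans, hext, hstrict⟩ a b hab
    have hQ'ab : Q' a b := by
      induction hab with
      | single h => exact hext _ _ h
      | tail _ h ih => exact htrans _ _ _ ih (hext _ _ h)
    by_cases hQab : Q a b
    · exact Or.inl hQab
    · right
      rintro ⟨hQba, -⟩
      exact (hstrict b a ⟨hQba, hQab⟩).2 hQ'ab
  · intro hcon
    set T : A → A → Prop := Relation.ReflTransGen Q with hT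
    have hmono : ∀ a b, T a b → {x | T x a} ⊆ {x | T x b} := by
      intro a b hab x hx
      exact Relation.ReflTransGen.trans hx hab
    set key : A → ℕ := fun a => ({x | T x a}).ncard with hkey
    have hfin : ∀ a : A, ({x | T x a}).Finite := fun a => Set.toFinite _
    have hle : ∀ a b, T a b → key a ≤ key b := fun a b h =>
      Set.ncard_le_ncard (hmono a b h) (hfin b)
    refine ⟨fun a b => key a ≤ key b, fun a => le_refl _, fun a b _ => le_total _ _,
      fun a b c h1 h2 => le_trans h1 h2, fun a b h => hle a b (Relation.ReflTransGen.single h),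
      ?_⟩
    rintro a b ⟨hQab, hQba⟩
    have hTab : T a b := Relation.ReflTransGen.single hQab
    have hTba : ¬ T b a := by
      intro h
      rcases (Relation.reflTransGen_iff_eq_or_transGen).1 h with he | ht
      · exact hQba (he ▸ hQab)
      · rcases hcon b a ht with h' | h'
        · exact hQba h'
        · exact h' ⟨hQab, hQba⟩
    have hlt : key a < key b := by
      apply Set.ncard_lt_ncard _ (hfin b)
      constructor
      · exact hmono a b hTab
      · intro hsub
        exact hTba (hsub (Relation.ReflTransGen.refl))
    exact ⟨le_of_lt hlt, not_le_of_gt hlt⟩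
end

section
/- Let R be a proto-ranking on a finite set X and x,y distinct alternatives with neither x R y nor y R x. Then there exists a ranking R' containing R such that x R' y and x,y are R'-adjacent (no z with x R' z R' y). -/
variable {X : Type*}

/-- The extension corollary: an unranked pair can be made adjacent in an extending ranking. -/
theorem stmt8 [Fintype X] (R : X → X → Prop) (hR : ProtoRanking R)
    (x y : X) (hxy : x ≠ y) (h1 : ¬ R x y) (h2 : ¬ R y x) :
    ∃ R' : X → X → Prop, Ranking R' ∧ (∀ a b : X, R a b → R' a b) ∧
      R' x y ∧ ¬ ∃ z : X, R' x z ∧ R' z y := by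
  classical
  obtain ⟨hirr, htr⟩ := hR
  set bel : X → Prop := fun a => R a x ∨ R a y with hbel
  set abv : X → Prop := fun a => R x a ∨ R y a with habv
  have nb : ∀ a, bel a → abv a → False := by
    rintro a (h | h) (h' | h')
    · exact hirr x (htr x a x h' h)
    · exact h2 (htr y a x h' h)
    · exact h1 (htr x a y h' h)
    · exact hirr y (htr y a y h' h)
  have belx : ¬ bel x := by
    rintro (h | h)
    · exact hirr x h
    · exact h1 h
  have abvx : ¬ abv x := by
    rintro (h | h)
    · exact hirr x h
    · exact h2 h
  have belR : ∀ a b, R a b → bel b → bel a := by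
    rintro a b hab (h | h)
    · exact Or.inl (htr a b x hab h)
    · exact Or.inr (htr a b y hab h)
  have abvR : ∀ a b, abv a → R a b → abv b := by
    rintro a b (h | h) hab
    · exact Or.inl (htr x a b h hab)
    · exact Or.inr (htr y a b h hab)
  set S : X → X → Prop :=
    fun a b => R a b ∨ (bel a ∧ abv b) ∨ (bel a ∧ b = x) ∨ (a = x ∧ abv b) with hSdef
  have Sirr : ∀ a, ¬ S a a := by
    rintro a (h | ⟨ha, hb⟩ | ⟨ha, rfl⟩ | ⟨rfl, hb⟩)
    · exact hirr a h
    · exact nb a ha hb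
    · exact belx ha
    · exact abvx hb
  have Strans : ∀ a b c, S a b → S b c → S a c := by
    rintro a b c (hab | ⟨ha, hb⟩ | ⟨ha, hbx⟩ | ⟨hax, hb⟩)
      (hbc | ⟨hb', hc⟩ | ⟨hb', hcx⟩ | ⟨hbx', hc⟩)
    · exact Or.inl (htr a b c hab hbc)
    · exact Or.inr (Or.inl ⟨belR a b hab hb', hc⟩)
    · exact Or.inr (Or.inr (Or.inl ⟨belR a b hab hb', hcx⟩))
    · exact Or.inr (Or.inl ⟨Or.inl (hbx' ▸ hab), hc⟩)
    · exact Or.inr (Or.inl ⟨ha, abvR b c hb hbc⟩)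
    · exact (nb b hb' hb).elim
    · exact (nb b hb' hb).elim
    · exact (abvx (hbx' ▸ hb)).elim
    · exact Or.inr (Or.inl ⟨ha, Or.inl (hbx ▸ hbc)⟩)
    · exact (belx (hbx ▸ hb')).elim
    · exact (belx (hbx ▸ hb')).elim
    · exact Or.inr (Or.inl ⟨ha, hc⟩)
    · exact Or.inr (Or.inr (Or.inr ⟨hax, abvR b c hb hbc⟩))
    · exact (nb b hb' hb).elim
    · exact (nb b hb' hb).elim
    · exact Or.inr (Or.inr (Or.inr ⟨hax, hc⟩))
  set S' : X → X → Prop := fun a b => S a b ∨ a = b with hS'def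
  haveI : IsPartialOrder X S' :=
    { refl := fun a => Or.inr rfl
      trans := by
        rintro a b c (hab | rfl) (hbc | rfl)
        · exact Or.inl (Strans a b c hab hbc)
        · exact Or.inl hab
        · exact Or.inl hbc
        · exact Or.inr rfl
      antisymm := by
        rintro a b (hab | rfl) (hba | h)
        · exact (Sirr a (Strans a b a hab hba)).elim
        · exact h.symm
        · rfl
        · rfl }
  obtain ⟨L, hLlin, hsub⟩ := extend_partialOrder S'
  haveI := hLlin
  set g : X → X := fun a => if a = y then x else a with hgdef
  have gx : g x = x := if_neg hxy
  have gy : g y = x := if_pos rfl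
  have gother : ∀ a, a ≠ y → g a = a := fun a h => if_neg h
  have geqx : ∀ a, g a = x → a = x ∨ a = y := by
    intro a h
    by_cases hay : a = y
    · exact Or.inr hay
    · rw [gother a hay] at h; exact Or.inl h
  set R' : X → X → Prop := fun a b => (L (g a) (g b) ∧ g a ≠ g b) ∨ (a = x ∧ b = y)
    with hR'def
  have hSL : ∀ a b, S a b → L a b := fun a b h => hsub a b (Or.inl h)
  refine ⟨R', ⟨?_, ?_, ?_⟩, ?_, ?_, ?_⟩
  · -- irreflexive
    rintro a (⟨-, h⟩ | ⟨rfl, h⟩)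
    · exact h rfl
    · exact hxy h
  · -- transitive
    rintro a b c (⟨hab, hne⟩ | ⟨hax, hby⟩) (⟨hbc, hne'⟩ | ⟨hbx, hcy⟩)
    · left
      refine ⟨trans_of L hab hbc, fun h => ?_⟩
      rw [h] at hab
      exact hne' (antisymm_of L hbc hab)
    · -- b = x, c = y : g c = g b
      left
      have hgc : g c = g b := by rw [hcy, hbx, gy, gx]
      rw [hgc]
      exact ⟨hab, hne⟩
    · -- a = x, b = y : g a = g b
      left
      have hga : g a = g b := by rw [hax, hby, gy, gx]
      rw [hga]
      exact ⟨hbc, hne'⟩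
    · exact absurd (hbx.symm.trans hby) hxy
  · -- total
    intro a b hab
    have hcol : (a = x ∧ b = y) ∨ (a = y ∧ b = x) → R' a b ∨ R' b a := by
      rintro (⟨ha, hb⟩ | ⟨ha, hb⟩)
      · exact Or.inl (Or.inr ⟨ha, hb⟩)
      · exact Or.inr (Or.inr ⟨hb, ha⟩)
    by_cases hg : g a = g b
    · refine hcol ?_
      by_cases hay : a = y
      · rw [hay, gy] at hg
        rcases geqx b hg.symm with h | h
        · exact Or.inr ⟨hay, h⟩
        · exact absurd (hay.trans h.symm) hab
      · rw [gother a hay] at hg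
        by_cases hby : b = y
        · rw [hby, gy] at hg
          exact Or.inl ⟨hg, hby⟩
        · rw [gother b hby] at hg
          exact absurd hg hab
    · rcases total_of L (g a) (g b) with h | h
      · exact Or.inl (Or.inl ⟨h, hg⟩)
      · exact Or.inr (Or.inl ⟨h, fun hh => hg hh.symm⟩)
  · -- extends R
    intro a b hab
    by_cases hay : a = y
    · have hab' : R y b := hay ▸ hab
      have hbx : b ≠ x := fun h => h2 (h ▸ hab')
      have hby : b ≠ y := fun h => hirr y (h ▸ hab')
      left
      rw [hay, gy, gother b hby]
      exact ⟨hSL x b (Or.inr (Or.inr (Or.inr ⟨rfl, Or.inr hab'⟩))), fun h => hbx h.symm⟩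
    · by_cases hby : b = y
      · have hab' : R a y := hby ▸ hab
        have hax : a ≠ x := fun h => h1 (h ▸ hab')
        left
        rw [hby, gy, gother a hay]
        exact ⟨hSL a x (Or.inr (Or.inr (Or.inl ⟨Or.inr hab', rfl⟩))), hax⟩
      · have hne : a ≠ b := fun h => hirr a (h ▸ hab)
        left
        rw [gother a hay, gother b hby]
        exact ⟨hSL a b (Or.inl hab), hne⟩
  · exact Or.inr ⟨rfl, rfl⟩
  · rintro ⟨z, hxz, hzy⟩
    rcases hxz with ⟨hL1, hne1⟩ | ⟨-, rfl⟩
    · rcases hzy with ⟨hL2, hne2⟩ | ⟨rfl, -⟩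
      · rw [gx] at hL1 hne1
        rw [gy] at hL2 hne2
        exact hne1 (antisymm_of L hL1 hL2)
      · rw [gx] at hne1
        exact hne1 rfl
    · rcases hzy with ⟨-, hne⟩ | ⟨h, -⟩
      · exact hne rfl
      · exact hxy h.symm
end

section
/- Let R be a proto-ranking on a finite set X and x,y,z alternatives such that the only pair among {x,y,z}² possibly related by R is (x,z) (i.e., {x,y,z}² ∩ R ⊆ {(x,z)}). Then there exists a ranking R' containing R ∪ {(x,z),(z,y)} such that the R'-order interval [x,y]_{R'} equals [x,z]_R ∪ {y}. -/
/-!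
Assign each element a level in `0, …, 4`, with `x` and the elements `R`-between `x` and `z` on
one level, `z` and `y` alone on the next two, and everything else strictly below or above these.
The level is a sum of indicators of `R`-up-closed sets, so it is monotone along `R`, and ordering
by level with ties broken by `R` is a proto-ranking containing `R`. Any ranking extending it puts
`z` below `y`, and nothing outside `[x, z]_R ∪ {y}` can lie between `x` and `y`.
-/

variable {X : Type*}

def OrdInterval (Q : X → X → Prop) (a b : X) : Set X :=
  {c : X | c = a ∨ c = b ∨ (Q a c ∧ Q c b)}

theorem Ranking.asymm {R : X → X → Prop} (hR : Ranking R) {a b : X} (hab : R a b) : ¬ R b a :=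
  fun hba => hR.1 a (hR.2.1 a b a hab hba)

theorem ProtoRanking.exists_ranking_extension {R : X → X → Prop} (hR : ProtoRanking R) :
    ∃ R' : X → X → Prop, Ranking R' ∧ ∀ a b, R a b → R' a b := by
  let : IsStrictOrder X R := { irrefl := hR.1, trans := hR.2 }
  let := partialOrderOfSO R
  refine ⟨fun a b => toLinearExtension a < toLinearExtension b,
    ⟨fun a => lt_irrefl _, fun a b c => lt_trans, fun a b hab => lt_or_gt_of_ne hab⟩,
    fun a b hab => lt_of_le_of_ne (toLinearExtension.monotone (Or.inr hab)) ?_⟩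
  rintro (rfl : a = b)
  exact hR.1 a hab

def RefineBy {α : Type*} [Preorder α] (f : X → α) (R : X → X → Prop) (a b : X) : Prop :=
  f a < f b ∨ (f a = f b ∧ R a b)

theorem ProtoRanking.refineBy {α : Type*} [Preorder α] {R : X → X → Prop} (hR : ProtoRanking R)
    (f : X → α) : ProtoRanking (RefineBy f R) := by
  refine ⟨fun a ha => ?_, fun a b c => ?_⟩
  · rcases ha with ha | ⟨-, ha⟩
    exacts [lt_irrefl _ ha, hR.1 a ha]
  · rintro (hab | ⟨hab, hab'⟩) (hbc | ⟨hbc, hbc'⟩)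
    · exact Or.inl (hab.trans hbc)
    · exact Or.inl (hbc ▸ hab)
    · exact Or.inl (hab ▸ hbc)
    · exact Or.inr ⟨hab.trans hbc, hR.2 a b c hab' hbc'⟩

theorem rel_refineBy {α : Type*} [PartialOrder α] {R : X → X → Prop} {f : X → α}
    (hf : ∀ ⦃a b⦄, R a b → f a ≤ f b) {a b : X} (hab : R a b) : RefineBy f R a b :=
  (hf hab).lt_or_eq.imp_right fun h => ⟨h, hab⟩

def IsUpClosed (R : X → X → Prop) (U : Set X) : Prop :=
  ∀ ⦃a b⦄, R a b → a ∈ U → b ∈ U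

theorem IsUpClosed.indicator_le {R : X → X → Prop} {U : Set X} (hU : IsUpClosed R U) {a b : X}
    (hab : R a b) : U.indicator (1 : X → ℕ) a ≤ U.indicator 1 b := by
  by_cases ha : a ∈ U
  · simp [ha, hU hab ha]
  · simp [ha]

theorem IsUpClosed.diff {R : X → X → Prop} {U D : Set X} (hU : IsUpClosed R U)
    (hD : ∀ ⦃a b⦄, R a b → a ∈ U → b ∈ D → a ∈ D) : IsUpClosed R (U \ D) :=
  fun _ _ hab ha => ⟨hU hab ha.1, fun hb => ha.2 (hD hab ha.1 hb)⟩

def relUpperClosure (R : X → X → Prop) (T : Set X) : Set X :=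
  {c | ∃ t ∈ T, t = c ∨ R t c}

theorem isUpClosed_relUpperClosure {R : X → X → Prop} (hR : ProtoRanking R) (T : Set X) :
    IsUpClosed R (relUpperClosure R T) := by
  rintro a b hab ⟨t, ht, rfl | hta⟩
  exacts [⟨_, ht, Or.inr hab⟩, ⟨t, ht, Or.inr (hR.2 t a b hta hab)⟩]

theorem subset_relUpperClosure (R : X → X → Prop) (T : Set X) : T ⊆ relUpperClosure R T :=
  fun t ht => ⟨t, ht, Or.inl rfl⟩

theorem exists_rel_of_mem_relUpperClosure {R : X → X → Prop} (hR : ProtoRanking R) {T : Set X}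
    {c w : X} (hc : c ∈ relUpperClosure R T) (hcw : R c w) : ∃ t ∈ T, R t w := by
  obtain ⟨t, ht, rfl | htc⟩ := hc
  exacts [⟨t, ht, hcw⟩, ⟨t, ht, hR.2 t c w htc hcw⟩]

def OnlyRelatesXToZ (R : X → X → Prop) (x y z : X) : Prop :=
  ∀ a b : X, a ∈ ({x, y, z} : Set X) → b ∈ ({x, y, z} : Set X) → R a b → a = x ∧ b = z

section Construction

variable {R : X → X → Prop} {x y z : X}

variable (R x y z) in
abbrev upperPart : Set X := relUpperClosure R {x, y, z}

/- Level 0: below all of `x, y, z`; level 1: `x` and the elements strictly between `x` and `z`;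
level 2: `z`; level 3: `y`; level 4: everything else. -/
variable (R x y z) in
noncomputable def level (c : X) : ℕ :=
  (upperPart R x y z).indicator 1 c
    + (upperPart R x y z \ {c | c = x ∨ R c z}).indicator 1 c
    + (upperPart R x y z \ {c | c = x ∨ c = z ∨ R c z}).indicator 1 c
    + (upperPart R x y z \ {c | c = x ∨ c = z ∨ R c z ∨ c = y}).indicator 1 c

theorem not_rel_of_mem_upperPart (hR : ProtoRanking R) (h : OnlyRelatesXToZ R x y z) {c w : X}
    (hw : w ∈ ({x, y, z} : Set X)) (hwz : w ≠ z) (hc : c ∈ upperPart R x y z) : ¬ R c w := by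
  intro hcw
  obtain ⟨t, ht, htw⟩ := exists_rel_of_mem_relUpperClosure hR hc hcw
  exact hwz (h t w ht hw htw).2

theorem eq_or_rel_of_mem_upperPart (hR : ProtoRanking R) (h : OnlyRelatesXToZ R x y z) {c : X}
    (hc : c ∈ upperPart R x y z) (hcz : R c z) : c = x ∨ R x c := by
  obtain ⟨t, ht, rfl | htc⟩ := hc
  · exact Or.inl (h t z ht (by simp) hcz).1
  · obtain rfl := (h t z ht (by simp) (hR.2 t c z htc hcz)).1
    exact Or.inr htc

theorem level_mono (hR : ProtoRanking R) (h : OnlyRelatesXToZ R x y z) (hxz : x ≠ z)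
    (hyz : y ≠ z) ⦃a b : X⦄ (hab : R a b) : level R x y z a ≤ level R x y z b := by
  have hU := isUpClosed_relUpperClosure hR {x, y, z}
  have hx : ∀ {c}, c ∈ upperPart R x y z → ¬ R c x :=
    not_rel_of_mem_upperPart hR h (by simp) hxz
  have hy : ∀ {c}, c ∈ upperPart R x y z → ¬ R c y :=
    not_rel_of_mem_upperPart hR h (by simp) hyz
  have hU₁ : IsUpClosed R (upperPart R x y z \ {c | c = x ∨ R c z}) := by
    refine hU.diff ?_
    rintro a b hab ha (rfl | hbz)
    exacts [absurd hab (hx ha), Or.inr (hR.2 a b z hab hbz)]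
  have hU₂ : IsUpClosed R (upperPart R x y z \ {c | c = x ∨ c = z ∨ R c z}) := by
    refine hU.diff ?_
    rintro a b hab ha (rfl | rfl | hbz)
    exacts [absurd hab (hx ha), Or.inr (Or.inr hab), Or.inr (Or.inr (hR.2 a b z hab hbz))]
  have hU₃ : IsUpClosed R (upperPart R x y z \ {c | c = x ∨ c = z ∨ R c z ∨ c = y}) := by
    refine hU.diff ?_
    rintro a b hab ha (rfl | rfl | hbz | rfl)
    exacts [absurd hab (hx ha), Or.inr (Or.inr (Or.inl hab)),
      Or.inr (Or.inr (Or.inl (hR.2 a b z hab hbz))), absurd hab (hy ha)]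
  unfold level
  gcongr ?_ + ?_ + ?_ + ?_
  exacts [hU.indicator_le hab, hU₁.indicator_le hab, hU₂.indicator_le hab, hU₃.indicator_le hab]

theorem level_eq_zero {c : X} (hc : c ∉ upperPart R x y z) : level R x y z c = 0 := by
  simp [level, hc]

theorem level_eq_four {c : X} (hc : c ∈ upperPart R x y z)
    (hc' : ¬ (c = x ∨ c = z ∨ R c z ∨ c = y)) : level R x y z c = 4 := by
  simp only [not_or] at hc'
  simp [level, hc, hc']

theorem level_x : level R x y z x = 1 := by
  simp [level, subset_relUpperClosure R _ (by simp : x ∈ ({x, y, z} : Set X))]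

theorem level_z (hR : ProtoRanking R) (hxz : x ≠ z) : level R x y z z = 2 := by
  simp [level, subset_relUpperClosure R _ (by simp : z ∈ ({x, y, z} : Set X)), hxz.symm, hR.1 z]

theorem level_y (h : OnlyRelatesXToZ R x y z) (hxy : x ≠ y) (hyz : y ≠ z) :
    level R x y z y = 3 := by
  have hyz' : ¬ R y z := fun hyz' => hxy (h y z (by simp) (by simp) hyz').1.symm
  simp [level, subset_relUpperClosure R _ (by simp : y ∈ ({x, y, z} : Set X)), hxy.symm, hyz,
    hyz']

theorem rel_and_rel_iff_of_refineBy_level (hR : ProtoRanking R) (h : OnlyRelatesXToZ R x y z)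
    (hxy : x ≠ y) (hyz : y ≠ z) (hxz : x ≠ z) {R' : X → X → Prop} (hR' : Ranking R')
    (hext : ∀ a b, RefineBy (level R x y z) R a b → R' a b) (c : X) :
    R' x c ∧ R' c y ↔ c = z ∨ (R x c ∧ R c z) := by
  have hzy : R' z y := hext z y (Or.inl (by rw [level_z hR hxz, level_y h hxy hyz]; omega))
  constructor
  · rintro ⟨hxc, hcy⟩
    have hc : c ∈ upperPart R x y z := by
      by_contra hc
      refine hR'.asymm hxc (hext c x (Or.inl ?_))
      rw [level_eq_zero hc, level_x]; omega
    have hc' : c = x ∨ c = z ∨ R c z ∨ c = y := by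
      by_contra hc'
      refine hR'.asymm hcy (hext y c (Or.inl ?_))
      rw [level_eq_four hc hc', level_y h hxy hyz]; omega
    rcases hc' with rfl | rfl | hcz | rfl
    · exact absurd hxc (hR'.1 c)
    · exact Or.inl rfl
    · rcases eq_or_rel_of_mem_upperPart hR h hc hcz with rfl | hxc'
      exacts [absurd hxc (hR'.1 c), Or.inr ⟨hxc', hcz⟩]
    · exact absurd hcy (hR'.1 c)
  · rintro (rfl | ⟨hxc, hcz⟩)
    · exact ⟨hext x c (Or.inl (by rw [level_x, level_z hR hxz]; omega)), hzy⟩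
    · have hmono := level_mono hR h hxz hyz
      exact ⟨hext x c (rel_refineBy hmono hxc),
        hR'.2.1 c z y (hext c z (rel_refineBy hmono hcz)) hzy⟩

end Construction

theorem stmt9_general (R : X → X → Prop) (hR : ProtoRanking R)
    (x y z : X) (hxy : x ≠ y) (hyz : y ≠ z) (hxz : x ≠ z)
    (h : ∀ a b : X, a ∈ ({x, y, z} : Set X) → b ∈ ({x, y, z} : Set X) →
      R a b → a = x ∧ b = z) :
    ∃ R' : X → X → Prop, Ranking R' ∧ (∀ a b : X, R a b → R' a b) ∧
      R' x z ∧ R' z y ∧ OrdInterval R' x y = OrdInterval R x z ∪ {y} := by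
  obtain ⟨R', hR', hext⟩ := (hR.refineBy (level R x y z)).exists_ranking_extension
  have hiff := rel_and_rel_iff_of_refineBy_level hR h hxy hyz hxz hR' hext
  obtain ⟨hxz', hzy⟩ := (hiff z).2 (Or.inl rfl)
  refine ⟨R', hR', fun a b hab => hext a b (rel_refineBy (level_mono hR h hxz hyz) hab), hxz',
    hzy, ?_⟩
  ext c
  simp only [OrdInterval, Set.union_singleton, Set.mem_insert_iff, Set.mem_ofPred_eq, hiff c]
  tauto

/-- Extension placing y immediately below z, without enlarging the interval from x to z. -/
theorem stmt9 [Fintype X] (R : X → X → Prop) (hR : ProtoRanking R)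
    (x y z : X) (hxy : x ≠ y) (hyz : y ≠ z) (hxz : x ≠ z)
    (h : ∀ a b : X, a ∈ ({x, y, z} : Set X) → b ∈ ({x, y, z} : Set X) →
      R a b → a = x ∧ b = z) :
    ∃ R' : X → X → Prop, Ranking R' ∧ (∀ a b : X, R a b → R' a b) ∧
      R' x z ∧ R' z y ∧ OrdInterval R' x y = OrdInterval R x z ∪ {y} :=
  stmt9_general R hR x y z hxy hyz hxz h
end

section
/- Let ≻ be a ranking on a finite set X and R a proto-ranking that is not total and contains no missed opportunities. Then there exist distinct alternatives x,y unranked by R such that offering a vote on {x,y} neither misses an opportunity nor takes a risk at R. -/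
variable {X : Type*}

def MissedOpp (succ R : X → X → Prop) (a b : X) : Prop :=
  ∃ c : X, succ a c ∧ succ c b ∧ R b a ∧ ¬ R b c ∧ ¬ R c a

def OfferMissesOpp (succ R : X → X → Prop) (x y : X) : Prop :=
  ∃ z : X, succ x z ∧ succ z y ∧ ¬ R y z ∧ ¬ R z x

def OfferTakesRisk (succ R : X → X → Prop) (x y : X) : Prop :=
  ∃ z : X, (succ z y ∧ R x z ∧ ¬ R y z) ∨ (succ x z ∧ R z y ∧ ¬ R z x)

open scoped Classical
open Finset

/-- rank: number of elements strictly below `a` in `succ`. -/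
noncomputable def rk [Fintype X] (succ : X → X → Prop) (a : X) : ℕ :=
  (Finset.univ.filter fun w => succ a w).card

/-- the open succ-interval between `y` and `x`, as a finset. -/
noncomputable def iv [Fintype X] (succ : X → X → Prop) (x y : X) : Finset X :=
  Finset.univ.filter fun z => succ x z ∧ succ z y

lemma rk_lt [Fintype X] (succ : X → X → Prop) (hsucc : Ranking succ)
    {a b : X} (h : succ a b) : rk succ b < rk succ a := by
  apply Finset.card_lt_card
  constructor
  · intro w hw
    simp only [mem_filter, mem_univ, true_and] at hw ⊢
    exact hsucc.2.1 a b w h hw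
  · intro hsub
    have hb : b ∈ Finset.univ.filter fun w => succ a w := by
      simp only [mem_filter, mem_univ, true_and]; exact h
    have := hsub hb
    simp only [mem_filter, mem_univ, true_and] at this
    exact hsucc.1 b this

/-- right expansion step -/
lemma expandA [Fintype X] (succ R : X → X → Prop)
    (hsucc : Ranking succ) (hR : ProtoRanking R)
    (hno : ∀ a b : X, ¬ MissedOpp succ R a b)
    {x y : X} (hxy : succ x y) (hx1 : ¬ R x y) (hx2 : ¬ R y x)
    (hM : ¬ OfferMissesOpp succ R x y)
    {z : X} (hz1 : succ z y) (hz2 : R x z) (hz3 : ¬ R y z) :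
    ∃ x' : X, succ x' y ∧ ¬ R x' y ∧ ¬ R y x' ∧ ¬ OfferMissesOpp succ R x' y ∧
      (iv succ x y).card < (iv succ x' y).card := by
  obtain ⟨hsir, hstr, hstot⟩ := hsucc
  obtain ⟨hRir, hRtr⟩ := hR
  have hsasym : ∀ a b : X, succ a b → ¬ succ b a := fun a b h h' => hsir a (hstr a b a h h')
  have hRasym : ∀ a b : X, R a b → ¬ R b a := fun a b h h' => hRir a (hRtr a b a h h')
  have hM' : ∀ w, succ x w → succ w y → R y w ∨ R w x := by
    intro w hw1 hw2
    by_contra hc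
    push_neg at hc
    exact hM ⟨w, hw1, hw2, hc.1, hc.2⟩
  set C : Finset X := Finset.univ.filter (fun c => succ c y ∧ R x c ∧ ¬ R y c) with hC
  have hCne : C.Nonempty := ⟨z, by simp only [hC, mem_filter, mem_univ, true_and]; exact ⟨hz1, hz2, hz3⟩⟩
  obtain ⟨z₀, hz₀C, hmin⟩ := C.exists_min_image (rk succ) hCne
  simp only [hC, mem_filter, mem_univ, true_and] at hz₀C
  obtain ⟨hz₀1, hz₀2, hz₀3⟩ := hz₀C
  have hz₀x : succ z₀ x := by
    have hne : z₀ ≠ x := fun h => hRir x (h ▸ hz₀2)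
    rcases hstot z₀ x hne with h | h
    · exact h
    · rcases hM' z₀ h hz₀1 with h' | h'
      · exact absurd h' hz₀3
      · exact absurd hz₀2 (hRasym _ _ h')
  have hnz₀y : ¬ R z₀ y := fun h => hx1 (hRtr _ _ _ hz₀2 h)
  have hno' : ∀ c, succ z₀ c → succ c x → R x c ∨ R c z₀ := by
    intro c h1 h2
    by_contra hc
    push_neg at hc
    exact hno z₀ x ⟨c, h1, h2, hz₀2, hc.1, hc.2⟩
  refine ⟨z₀, hstr _ _ _ hz₀x hxy, hnz₀y, hz₀3, ?_, ?_⟩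
  · rintro ⟨w, hw1, hw2, hw3, hw4⟩
    by_cases hwx : w = x
    · subst hwx; exact hw4 hz₀2
    rcases hstot x w (fun h => hwx h.symm) with h | h
    · rcases hM' w h hw2 with h' | h'
      · exact hw3 h'
      · exact hw4 (hRtr _ _ _ h' hz₀2)
    · rcases hno' w hw1 h with h' | h'
      · have hwC : w ∈ C := by
          simp only [hC, mem_filter, mem_univ, true_and]; exact ⟨hw2, h', hw3⟩
        have := hmin w hwC
        exact absurd (rk_lt succ ⟨hsir, hstr, hstot⟩ hw1) (by omega)
      · exact hw4 h'
  · apply Finset.card_lt_card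
    constructor
    · intro w hw
      simp only [iv, mem_filter, mem_univ, true_and] at hw ⊢
      exact ⟨hstr _ _ _ hz₀x hw.1, hw.2⟩
    · intro hsub
      have hx : x ∈ iv succ z₀ y := by
        simp only [iv, mem_filter, mem_univ, true_and]; exact ⟨hz₀x, hxy⟩
      have := hsub hx
      simp only [iv, mem_filter, mem_univ, true_and] at this
      exact hsir x this.1

/-- left expansion step -/
lemma expandB [Fintype X] (succ R : X → X → Prop)
    (hsucc : Ranking succ) (hR : ProtoRanking R)
    (hno : ∀ a b : X, ¬ MissedOpp succ R a b)
    {x y : X} (hxy : succ x y) (hx1 : ¬ R x y) (hx2 : ¬ R y x)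
    (hM : ¬ OfferMissesOpp succ R x y)
    {z : X} (hz1 : succ x z) (hz2 : R z y) (hz3 : ¬ R z x) :
    ∃ y' : X, succ x y' ∧ ¬ R x y' ∧ ¬ R y' x ∧ ¬ OfferMissesOpp succ R x y' ∧
      (iv succ x y).card < (iv succ x y').card := by
  obtain ⟨hsir, hstr, hstot⟩ := hsucc
  obtain ⟨hRir, hRtr⟩ := hR
  have hsasym : ∀ a b : X, succ a b → ¬ succ b a := fun a b h h' => hsir a (hstr a b a h h')
  have hRasym : ∀ a b : X, R a b → ¬ R b a := fun a b h h' => hRir a (hRtr a b a h h')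
  have hM' : ∀ w, succ x w → succ w y → R y w ∨ R w x := by
    intro w hw1 hw2
    by_contra hc
    push_neg at hc
    exact hM ⟨w, hw1, hw2, hc.1, hc.2⟩
  set C : Finset X := Finset.univ.filter (fun c => succ x c ∧ R c y ∧ ¬ R c x) with hC
  have hCne : C.Nonempty := ⟨z, by simp only [hC, mem_filter, mem_univ, true_and]; exact ⟨hz1, hz2, hz3⟩⟩
  obtain ⟨z₀, hz₀C, hmax⟩ := C.exists_max_image (rk succ) hCne
  simp only [hC, mem_filter, mem_univ, true_and] at hz₀C
  obtain ⟨hz₀1, hz₀2, hz₀3⟩ := hz₀C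
  have hz₀y : succ y z₀ := by
    have hne : z₀ ≠ y := fun h => hRir y (h ▸ hz₀2)
    rcases hstot z₀ y hne with h | h
    · rcases hM' z₀ hz₀1 h with h' | h'
      · exact absurd hz₀2 (hRasym _ _ h')
      · exact absurd h' hz₀3
    · exact h
  have hnxz₀ : ¬ R x z₀ := fun h => hx1 (hRtr _ _ _ h hz₀2)
  have hno' : ∀ c, succ y c → succ c z₀ → R z₀ c ∨ R c y := by
    intro c h1 h2
    by_contra hc
    push_neg at hc
    exact hno y z₀ ⟨c, h1, h2, hz₀2, hc.1, hc.2⟩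
  refine ⟨z₀, hstr _ _ _ hxy hz₀y, hnxz₀, hz₀3, ?_, ?_⟩
  · rintro ⟨w, hw1, hw2, hw3, hw4⟩
    by_cases hwy : w = y
    · subst hwy; exact hw3 hz₀2
    rcases hstot y w (fun h => hwy h.symm) with h | h
    · rcases hno' w h hw2 with h' | h'
      · exact hw3 h'
      · have hwC : w ∈ C := by
          simp only [hC, mem_filter, mem_univ, true_and]; exact ⟨hw1, h', hw4⟩
        have := hmax w hwC
        exact absurd (rk_lt succ ⟨hsir, hstr, hstot⟩ hw2) (by omega)
    · rcases hM' w hw1 h with h' | h'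
      · exact hw3 (hRtr _ _ _ hz₀2 h')
      · exact hw4 h'
  · apply Finset.card_lt_card
    constructor
    · intro w hw
      simp only [iv, mem_filter, mem_univ, true_and] at hw ⊢
      exact ⟨hw.1, hstr _ _ _ hw.2 hz₀y⟩
    · intro hsub
      have hy : y ∈ iv succ x z₀ := by
        simp only [iv, mem_filter, mem_univ, true_and]; exact ⟨hxy, hz₀y⟩
      have := hsub hy
      simp only [iv, mem_filter, mem_univ, true_and] at this
      exact hsir y this.2

/-- A non-total, missed-opportunity-free proto-ranking always admits a non-error offer. -/
theorem stmt10 [Fintype X] (succ R : X → X → Prop)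
    (hsucc : Ranking succ) (hR : ProtoRanking R)
    (hnt : ∃ a b : X, a ≠ b ∧ ¬ R a b ∧ ¬ R b a)
    (hno : ∀ a b : X, ¬ MissedOpp succ R a b) :
    ∃ x y : X, succ x y ∧ ¬ R x y ∧ ¬ R y x ∧
      ¬ OfferMissesOpp succ R x y ∧ ¬ OfferTakesRisk succ R x y := by
  classical
  obtain ⟨hsir, hstr, hstot⟩ := id hsucc
  obtain ⟨hRir, hRtr⟩ := id hR
  have hRasym : ∀ a b : X, R a b → ¬ R b a := fun a b h h' => hRir a (hRtr a b a h h')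
  -- the set of unranked, succ-oriented pairs
  set U0 : Finset (X × X) := Finset.univ.filter
      (fun p => succ p.1 p.2 ∧ ¬ R p.1 p.2 ∧ ¬ R p.2 p.1) with hU0
  have hU0ne : U0.Nonempty := by
    obtain ⟨a, b, hab, h1, h2⟩ := hnt
    rcases hstot a b hab with h | h
    · exact ⟨(a, b), by simp only [hU0, mem_filter, mem_univ, true_and]; exact ⟨h, h1, h2⟩⟩
    · exact ⟨(b, a), by simp only [hU0, mem_filter, mem_univ, true_and]; exact ⟨h, h2, h1⟩⟩
  -- a minimal-interval unranked pair misses no opportunities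
  obtain ⟨q, hqU, hqmin⟩ := U0.exists_min_image (fun p => (iv succ p.1 p.2).card) hU0ne
  simp only [hU0, mem_filter, mem_univ, true_and] at hqU
  obtain ⟨hq1, hq2, hq3⟩ := hqU
  have hqM : ¬ OfferMissesOpp succ R q.1 q.2 := by
    rintro ⟨w, hw1, hw2, hw3, hw4⟩
    have hsub_left : (iv succ q.1 w).card < (iv succ q.1 q.2).card := by
      apply Finset.card_lt_card
      constructor
      · intro u hu
        simp only [iv, mem_filter, mem_univ, true_and] at hu ⊢
        exact ⟨hu.1, hstr _ _ _ hu.2 hw2⟩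
      · intro hsub
        have hw : w ∈ iv succ q.1 q.2 := by
          simp only [iv, mem_filter, mem_univ, true_and]; exact ⟨hw1, hw2⟩
        have := hsub hw
        simp only [iv, mem_filter, mem_univ, true_and] at this
        exact hsir w this.2
    have hsub_right : (iv succ w q.2).card < (iv succ q.1 q.2).card := by
      apply Finset.card_lt_card
      constructor
      · intro u hu
        simp only [iv, mem_filter, mem_univ, true_and] at hu ⊢
        exact ⟨hstr _ _ _ hw1 hu.1, hu.2⟩
      · intro hsub
        have hw : w ∈ iv succ q.1 q.2 := by
          simp only [iv, mem_filter, mem_univ, true_and]; exact ⟨hw1, hw2⟩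
        have := hsub hw
        simp only [iv, mem_filter, mem_univ, true_and] at this
        exact hsir w this.1
    -- (q.1, w) must be ranked
    have hxw : R q.1 w := by
      by_contra hc
      have : (q.1, w) ∈ U0 := by
        simp only [hU0, mem_filter, mem_univ, true_and]; exact ⟨hw1, hc, hw4⟩
      have := hqmin _ this
      simp only at this
      omega
    -- (w, q.2) must be ranked
    have hwy : R w q.2 := by
      by_contra hc
      have : (w, q.2) ∈ U0 := by
        simp only [hU0, mem_filter, mem_univ, true_and]; exact ⟨hw2, hc, hw3⟩
      have := hqmin _ this
      simp only at this
      omega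
    exact hq2 (hRtr _ _ _ hxw hwy)
  -- now take a maximal-interval pair among miss-free unranked pairs
  set U : Finset (X × X) := Finset.univ.filter
      (fun p => succ p.1 p.2 ∧ ¬ R p.1 p.2 ∧ ¬ R p.2 p.1 ∧
        ¬ OfferMissesOpp succ R p.1 p.2) with hU
  have hUne : U.Nonempty :=
    ⟨q, by simp only [hU, mem_filter, mem_univ, true_and]; exact ⟨hq1, hq2, hq3, hqM⟩⟩
  obtain ⟨p, hpU, hpmax⟩ := U.exists_max_image (fun p => (iv succ p.1 p.2).card) hUne
  simp only [hU, mem_filter, mem_univ, true_and] at hpU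
  obtain ⟨hp1, hp2, hp3, hpM⟩ := hpU
  refine ⟨p.1, p.2, hp1, hp2, hp3, hpM, ?_⟩
  rintro ⟨z, hrisk⟩
  rcases hrisk with ⟨h1, h2, h3⟩ | ⟨h1, h2, h3⟩
  · obtain ⟨x', ha, hb, hc, hd, he⟩ := expandA succ R hsucc hR hno hp1 hp2 hp3 hpM h1 h2 h3
    have : (x', p.2) ∈ U := by
      simp only [hU, mem_filter, mem_univ, true_and]; exact ⟨ha, hb, hc, hd⟩
    have := hpmax _ this
    simp only at this
    omega
  · obtain ⟨y', ha, hb, hc, hd, he⟩ := expandB succ R hsucc hR hno hp1 hp2 hp3 hpM h1 h2 h3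
    have : (p.1, y') ∈ U := by
      simp only [hU, mem_filter, mem_univ, true_and]; exact ⟨ha, hb, hc, hd⟩
    have := hpmax _ this
    simp only at this
    omega
end

section
/- Let ≻ be a ranking on a finite set X, R a proto-ranking, and A a nonempty set of unordered pairs of distinct alternatives. Suppose that for every pair {x,y} ∈ A there is a pair {z,w} ∈ A that makes {x,y} an error at R. Then R contains a missed opportunity. -/
variable {X : Type*}

def MakesError (succ R : X → X → Prop) (z w x y : X) : Prop :=
  ¬ R x y ∧ ¬ R y x ∧ ¬ R z w ∧ ¬ R w z ∧
    ((succ x z ∧ succ z y ∧ ¬ R y z ∧ ¬ R z x ∧ (w = x ∨ w = y)) ∨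
     (succ z y ∧ R x z ∧ w = y) ∨
     (succ x z ∧ R z y ∧ w = x))

/-- Auxiliary relation: `t` dominates `u` if either `t` is above `u` in `succ`
with `u` not ranked above `t` by `R`, or `t` is ranked above `u` by `R`. -/
def TriRel (succ R : X → X → Prop) (t u : X) : Prop :=
  (succ t u ∧ ¬ R u t) ∨ R t u

lemma triRel_irrefl (succ R : X → X → Prop)
    (hsirr : ∀ x : X, ¬ succ x x) (hrirr : ∀ x : X, ¬ R x x) (u : X) :
    ¬ TriRel succ R u u := by
  rintro (⟨h, -⟩ | h)
  · exact hsirr u h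
  · exact hrirr u h

/-- Under the absence of missed opportunities, `TriRel` is transitive. -/
lemma triRel_trans (succ R : X → X → Prop)
    (hstr : ∀ x y z : X, succ x y → succ y z → succ x z)
    (hstot : ∀ x y : X, x ≠ y → succ x y ∨ succ y x)
    (hrtr : ∀ x y z : X, R x y → R y z → R x z)
    (M : ∀ a c b : X, succ a c → succ c b → R b a → R b c ∨ R c a)
    {t u v : X} (h1 : TriRel succ R t u) (h2 : TriRel succ R u v) :
    TriRel succ R t v := by
  rcases h1 with ⟨hstu, hnRut⟩ | hRtu <;> rcases h2 with ⟨hsuv, hnRvu⟩ | hRuv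
  · -- D, D
    refine Or.inl ⟨hstr _ _ _ hstu hsuv, fun hRvt => ?_⟩
    rcases M t u v hstu hsuv hRvt with h | h
    · exact hnRvu h
    · exact hnRut h
  · -- D, R
    by_cases htv : t = v
    · exact absurd (htv ▸ hRuv) hnRut
    · rcases hstot t v htv with hstv | hsvt
      · exact Or.inl ⟨hstv, fun hRvt => hnRut (hrtr _ _ _ hRuv hRvt)⟩
      · refine Or.inr ?_
        by_contra hnRtv
        rcases M v t u hsvt hstu hRuv with h | h
        · exact hnRut h
        · exact hnRtv h
  · -- R, D
    by_cases htv : t = v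
    · exact absurd hRtu (htv ▸ hnRvu)
    · rcases hstot t v htv with hstv | hsvt
      · exact Or.inl ⟨hstv, fun hRvt => hnRvu (hrtr _ _ _ hRvt hRtu)⟩
      · refine Or.inr ?_
        by_contra hnRtv
        rcases M u v t hsuv hsvt hRtu with h | h
        · exact hnRtv h
        · exact hnRvu h
  · -- R, R
    exact Or.inr (hrtr _ _ _ hRtu hRuv)

/-- If every pair in A is made an error by some pair in A, then R contains a missed opportunity. -/
theorem stmt11 [Fintype X] (succ R : X → X → Prop)
    (hsucc : Ranking succ) (hR : ProtoRanking R)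
    (A : Set (Sym2 X)) (hne : A.Nonempty) (hdist : ∀ p ∈ A, ¬ p.IsDiag)
    (herr : ∀ x y : X, succ x y → s(x, y) ∈ A →
      ∃ z w : X, s(z, w) ∈ A ∧ MakesError succ R z w x y) :
    ∃ a b : X, MissedOpp succ R a b := by
  by_contra hno
  push_neg at hno
  -- no missed opportunity
  have M : ∀ a c b : X, succ a c → succ c b → R b a → R b c ∨ R c a := by
    intro a c b hac hcb hba
    by_contra hcon
    push_neg at hcon
    exact hno a b ⟨c, hac, hcb, hba, hcon.1, hcon.2⟩
  obtain ⟨hsirr, hstr, hstot⟩ := hsucc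
  obtain ⟨hrirr, hrtr⟩ := hR
  -- dual data
  set succ' : X → X → Prop := fun a b => succ b a with hsucc'def
  set R' : X → X → Prop := fun a b => R b a with hR'def
  have hsirr' : ∀ x : X, ¬ succ' x x := hsirr
  have hrirr' : ∀ x : X, ¬ R' x x := hrirr
  have hstr' : ∀ x y z : X, succ' x y → succ' y z → succ' x z :=
    fun x y z h1 h2 => hstr z y x h2 h1
  have hstot' : ∀ x y : X, x ≠ y → succ' x y ∨ succ' y x :=
    fun x y h => (hstot x y h).symm
  have hrtr' : ∀ x y z : X, R' x y → R' y z → R' x z :=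
    fun x y z h1 h2 => hrtr z y x h2 h1
  have M' : ∀ a c b : X, succ' a c → succ' c b → R' b a → R' b c ∨ R' c a :=
    fun a c b h1 h2 h3 => (M b c a h2 h1 h3).symm
  -- strict decrease of down-set cardinality
  have hdec : ∀ {t u : X}, TriRel succ R t u →
      Set.ncard {c | TriRel succ R u c} < Set.ncard {c | TriRel succ R t c} := by
    intro t u h
    have hss : {c | TriRel succ R u c} ⊂ {c | TriRel succ R t c} := by
      rw [Set.ssubset_def]
      constructor
      · exact fun c hc => triRel_trans succ R hstr hstot hrtr M h hc
      · intro hts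
        exact triRel_irrefl succ R hsirr hrirr u
          (hts (show u ∈ {c | TriRel succ R t c} from h))
    exact Set.ncard_lt_ncard hss (Set.toFinite _)
  have hdec' : ∀ {t u : X}, TriRel succ' R' t u →
      Set.ncard {c | TriRel succ' R' u c} < Set.ncard {c | TriRel succ' R' t c} := by
    intro t u h
    have hss : {c | TriRel succ' R' u c} ⊂ {c | TriRel succ' R' t c} := by
      rw [Set.ssubset_def]
      constructor
      · exact fun c hc => triRel_trans succ' R' hstr' hstot' hrtr' M' h hc
      · intro hts
        exact triRel_irrefl succ' R' hsirr' hrirr' u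
          (hts (show u ∈ {c | TriRel succ' R' t c} from h))
    exact Set.ncard_lt_ncard hss (Set.toFinite _)
  -- the measure
  set mu : X → X → ℕ := fun x y =>
    Set.ncard {c | TriRel succ R x c} + Set.ncard {c | TriRel succ' R' y c} with hmu_def
  have topdec : ∀ {x z y : X}, TriRel succ R x z → mu z y < mu x y := by
    intro x z y h
    exact Nat.add_lt_add_right (hdec h) _
  have botdec : ∀ {x y z : X}, TriRel succ' R' y z → mu x z < mu x y := by
    intro x y z h
    exact Nat.add_lt_add_left (hdec' h) _
  -- main descent
  have key : ∀ n : ℕ, ∀ x y : X, mu x y ≤ n → succ x y → s(x, y) ∈ A → False := by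
    intro n
    induction n using Nat.strong_induction_on with
    | _ n ih =>
      intro x y hmun hxy hA
      obtain ⟨z, w, hAq, hme⟩ := herr x y hxy hA
      obtain ⟨hxy1, hyx1, hzw1, hwz1, hcase⟩ := hme
      rcases hcase with ⟨hxz, hzy, hyz, hzx, hw | hw⟩ | ⟨hzy, hxz, hw⟩ | ⟨hxz, hzy, hw⟩
      all_goals rw [hw] at hAq
      · -- witness pair is {z, x} : bottom moves from y to z
        have hAq' : s(x, z) ∈ A := by rwa [Sym2.eq_swap] at hAq
        have hedge : TriRel succ' R' y z := Or.inl ⟨hzy, hyz⟩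
        exact ih (mu x z) (lt_of_lt_of_le (botdec hedge) hmun) x z le_rfl hxz hAq'
      · -- witness pair is {z, y} : top moves from x to z
        have hedge : TriRel succ R x z := Or.inl ⟨hxz, hzx⟩
        exact ih (mu z y) (lt_of_lt_of_le (topdec hedge) hmun) z y le_rfl hzy hAq
      · -- case (ii) : witness pair is {z, y}, R x z : top moves
        have hedge : TriRel succ R x z := Or.inr hxz
        exact ih (mu z y) (lt_of_lt_of_le (topdec hedge) hmun) z y le_rfl hzy hAq
      · -- case (iii) : witness pair is {z, x}, R z y : bottom moves
        have hAq' : s(x, z) ∈ A := by rwa [Sym2.eq_swap] at hAq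
        have hedge : TriRel succ' R' y z := Or.inr hzy
        exact ih (mu x z) (lt_of_lt_of_le (botdec hedge) hmun) x z le_rfl hxz hAq'
  -- conclude from nonemptiness
  obtain ⟨p, hp⟩ := hne
  revert hp
  refine Sym2.ind (fun a b hab => ?_) p
  have hne' : a ≠ b := by
    intro h
    exact hdist _ hab (Sym2.mk_isDiag_iff.mpr h)
  rcases hstot a b hne' with h | h
  · exact key (mu a b) a b le_rfl h hab
  · exact key (mu b a) b a le_rfl h (by rwa [Sym2.eq_swap] at hab)
end

section
/- Let R be a proto-ranking containing no missed opportunities (with respect to a ranking ≻), let x ≻ y be alternatives unranked by R, and suppose offering a pair {z,w} of unranked alternatives at R neither misses an opportunity nor takes a risk. If the proto-ranking R' obtained by ranking the pair {z,w} (in either direction, followed by transitive closure) satisfies y R' x, then {z,w} = {x,y}. -/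
variable {X : Type*}

/-- Absent errors, a misfortune y R' x can only arise from a vote on {x,y} itself. -/
theorem stmt12 [Fintype X] (succ R : X → X → Prop)
    (hsucc : Ranking succ) (hR : ProtoRanking R)
    (hno : ∀ a b : X, ¬ MissedOpp succ R a b)
    (x y z w : X) (hxy : succ x y) (hx : ¬ R x y) (hy : ¬ R y x)
    (hzw : succ z w) (hz : ¬ R z w) (hw : ¬ R w z)
    (hnm : ¬ OfferMissesOpp succ R z w) (hnr : ¬ OfferTakesRisk succ R z w)
    (hyx : Relation.TransGen (fun p q => R p q ∨ (p = z ∧ q = w)) y x ∨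
           Relation.TransGen (fun p q => R p q ∨ (p = w ∧ q = z)) y x) :
    z = x ∧ w = y := by
  obtain ⟨hsi, hst, hstot⟩ := hsucc
  obtain ⟨hRi, hRt⟩ := hR
  have sasym : ∀ a b : X, succ a b → ¬ succ b a := fun a b h1 h2 => hsi a (hst a b a h1 h2)
  have decomp : ∀ (u v a b : X),
      Relation.TransGen (fun p q => R p q ∨ (p = u ∧ q = v)) a b →
      R a b ∨ ((a = u ∨ R a u) ∧ (v = b ∨ R v b)) := by
    intro u v a b h
    induction h with
    | single h =>
      rcases h with h | ⟨rfl, rfl⟩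
      · exact Or.inl h
      · exact Or.inr ⟨Or.inl rfl, Or.inl rfl⟩
    | tail _ hbc ih =>
      rcases hbc with hbc | ⟨rfl, rfl⟩
      · rcases ih with h | ⟨h1, h2⟩
        · exact Or.inl (hRt _ _ _ h hbc)
        · refine Or.inr ⟨h1, ?_⟩
          rcases h2 with rfl | h2
          · exact Or.inr hbc
          · exact Or.inr (hRt _ _ _ h2 hbc)
      · rcases ih with h | ⟨h1, _⟩
        · exact Or.inr ⟨Or.inr h, Or.inl rfl⟩
        · exact Or.inr ⟨h1, Or.inl rfl⟩
  rcases hyx with h1 | h2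
  · -- edge (z, w) used: contradiction in all cases
    exfalso
    rcases decomp z w y x h1 with h | ⟨hl, hr⟩
    · exact hy h
    rcases hl with rfl | hyz <;> rcases hr with rfl | hwx
    · exact sasym w y hxy hzw
    · -- y = z, R w x
      exact hno x w ⟨y, hxy, hzw, hwx, hw, hy⟩
    · -- R y z, w = x
      exact hno z y ⟨w, hzw, hxy, hyz, hy, hw⟩
    · -- R y z, R w x
      have hwy : w ≠ y := fun h => hy (h ▸ hwx)
      rcases hstot w y hwy with hWy | hYw
      · -- succ w y
        have hnyw : ¬ R y w := fun h => hy (hRt y w x h hwx)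
        exact hno z y ⟨w, hzw, hWy, hyz, hnyw, hw⟩
      · -- succ y w
        have hnwy : ¬ R w y := fun h => hw (hRt w y z h hyz)
        exact hno x w ⟨y, hxy, hYw, hwx, hnwy, hy⟩
  · -- edge (w, z) used
    rcases decomp w z y x h2 with h | ⟨hl, hr⟩
    · exact absurd h hy
    rcases hl with rfl | hyw <;> rcases hr with rfl | hzx
    · exact ⟨rfl, rfl⟩
    · -- y = w, R z x
      exact absurd (⟨x, Or.inl ⟨hxy, hzx, hy⟩⟩ : OfferTakesRisk succ R z y) hnr
    · -- R y w, z = x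
      exact absurd (⟨y, Or.inr ⟨hxy, hyw, hy⟩⟩ : OfferTakesRisk succ R z w) hnr
    · -- R y w, R z x
      exfalso
      have hnwx : ¬ R w x := fun h => hy (hRt y w x hyw h)
      have hnyz : ¬ R y z := fun h => hy (hRt y z x h hzx)
      have hwx : w ≠ x := fun h => hz (h ▸ hzx)
      have hyz : y ≠ z := fun h => hy ((h ▸ hzx : R y x))
      rcases hstot x w hwx.symm with hXw | hWx
      · exact hnr ⟨x, Or.inl ⟨hXw, hzx, hnwx⟩⟩
      · rcases hstot z y hyz.symm with hZy | hYz
        · exact hnr ⟨y, Or.inr ⟨hZy, hyw, hnyz⟩⟩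
        · exact hsi x (hst x y x hxy (hst y z x hYz (hst z w x hzw hWx)))
end

section
/- Let R be a proto-ranking containing no missed opportunities (with respect to ranking ≻), and suppose z,w are unranked by R and offering {z,w} neither misses an opportunity nor takes a risk at R. Then the transitive closure R' of R ∪ {(z,w)} contains no missed opportunities. -/
variable {X : Type*}

/-- Error-free offers preserve the absence of missed opportunities. -/
theorem stmt13 [Fintype X] (succ R : X → X → Prop)
    (hsucc : Ranking succ) (hR : ProtoRanking R)
    (hno : ∀ a b : X, ¬ MissedOpp succ R a b)
    (z w : X) (hne : z ≠ w) (hz : ¬ R z w) (hw : ¬ R w z)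
    (h1 : succ z w → ¬ OfferMissesOpp succ R z w ∧ ¬ OfferTakesRisk succ R z w)
    (h2 : succ w z → ¬ OfferMissesOpp succ R w z ∧ ¬ OfferTakesRisk succ R w z) :
    ∀ a b : X, ¬ MissedOpp succ
      (fun p q => Relation.TransGen (fun p' q' => R p' q' ∨ (p' = z ∧ q' = w)) p q) a b := by
  obtain ⟨hirr, htrans, htot⟩ := hsucc
  obtain ⟨hRirr, hRtrans⟩ := hR
  have hasym : ∀ x y : X, succ x y → ¬ succ y x := fun x y h h' => hirr x (htrans _ _ _ h h')
  have key : ∀ x y : X, Relation.TransGen (fun p' q' => R p' q' ∨ (p' = z ∧ q' = w)) x y ↔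
      (R x y ∨ ((x = z ∨ R x z) ∧ (y = w ∨ R w y))) := by
    intro x y
    constructor
    · intro h
      induction h with
      | single h =>
        rcases h with h | ⟨rfl, rfl⟩
        · exact Or.inl h
        · exact Or.inr ⟨Or.inl rfl, Or.inl rfl⟩
      | @tail y' q hxy hyq ih =>
        rcases hyq with h | ⟨rfl, rfl⟩
        · rcases ih with h' | ⟨h1', h2'⟩
          · exact Or.inl (hRtrans _ _ _ h' h)
          · refine Or.inr ⟨h1', Or.inr ?_⟩
            rcases h2' with rfl | h2'
            · exact h
            · exact hRtrans _ _ _ h2' h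
        · rcases ih with h' | ⟨h1', h2'⟩
          · exact Or.inr ⟨Or.inr h', Or.inl rfl⟩
          · rcases h2' with rfl | h2'
            · exact absurd rfl hne
            · exact absurd h2' hw
    · intro h
      rcases h with h | ⟨h1', h2'⟩
      · exact Relation.TransGen.single (Or.inl h)
      · have hzw : Relation.TransGen (fun p' q' => R p' q' ∨ (p' = z ∧ q' = w)) z w :=
          Relation.TransGen.single (Or.inr ⟨rfl, rfl⟩)
        have hxw : Relation.TransGen (fun p' q' => R p' q' ∨ (p' = z ∧ q' = w)) x w := by
          rcases h1' with rfl | h1'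
          · exact hzw
          · exact Relation.TransGen.head (Or.inl h1') hzw
        rcases h2' with rfl | h2'
        · exact hxw
        · exact Relation.TransGen.tail hxw (Or.inl h2')
  rintro a b ⟨c, hac, hcb, hba, hbc, hca⟩
  simp only [key] at hba hbc hca
  push_neg at hbc hca
  obtain ⟨hbc1, hbc2⟩ := hbc
  obtain ⟨hca1, hca2⟩ := hca
  rcases hba with hba | ⟨hbz, haw⟩
  · exact hno a b ⟨c, hac, hcb, hba, hbc1, hca1⟩
  · have hcw' := hbc2 hbz
    obtain ⟨hcnw, hRwc⟩ := hcw'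
    have hnaw : ¬(a ≠ w ∧ ¬ R w a) := fun h => haw.elim h.1 h.2
    have hcnz : c ≠ z := fun h => hnaw (hca2 (Or.inl h))
    have hRcz : ¬ R c z := fun h => hnaw (hca2 (Or.inr h))
    have hRzc : ¬ R z c := by
      rcases hbz with rfl | hbz
      · exact hbc1
      · exact fun h => hbc1 (hRtrans _ _ _ hbz h)
    have hRcw : ¬ R c w := by
      rcases haw with rfl | haw
      · exact hca1
      · exact fun h => hca1 (hRtrans _ _ _ h haw)
    rcases htot c w hcnw with hcw | hwc
    · rcases haw with rfl | haw
      · exact hasym _ _ hac hcw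
      · exact hno a w ⟨c, hac, hcw, haw, hRwc, hca1⟩
    · rcases htot z c (fun h => hcnz h.symm) with hzc | hcz
      · rcases hbz with rfl | hbz
        · exact hasym _ _ hzc hcb
        · exact hno z b ⟨c, hzc, hcb, hbz, hbc1, hRcz⟩
      · exact (h2 (htrans _ _ _ hwc hcz)).1 ⟨c, hwc, hcz, hRzc, hRcw⟩
end

section
/- For a tournament W on a finite set X with at least 3 elements, the following are equivalent: (1) W is not transitive; (2) for every ranking ≻ on X, there exist distinct W-feasible rankings R and R' such that R is more aligned with ≻ than R'. -/
variable {X : Type*}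

/-!
Existence of feasible rankings is a swapping argument: among the rankings that agree with `succ`
on every `W`-edge, take one with the fewest pairs ranked against `W`. Exchanging an adjacent pair
ranked against `W` keeps it a ranking, keeps that agreement, and removes one such pair, so the
minimiser is feasible. Doing this for `succ` and for its reverse gives `R` and `R'`; `R` is more
aligned with `succ`, and `R = R'` would put every `W`-edge into `R`, making `W` transitive.
Conversely, a ranking is the transitive closure of its adjacency relation, so for transitive `W`
every feasible ranking is contained in, hence equal to, `W`.
-/

open Relation

lemma eq_of_le_of_total_of_asymm {r s : X → X → Prop} (hr : ∀ x y, x ≠ y → r x y ∨ r y x)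
    (hs : ∀ x y, s x y → ¬ s y x) (h : ∀ x y, r x y → s x y) : r = s := by
  funext x y
  refine propext ⟨h x y, fun hxy => ?_⟩
  have hne : x ≠ y := by rintro rfl; exact hs x x hxy hxy
  exact (hr x y hne).resolve_right fun hyx => hs x y hxy (h y x hyx)

lemma ProtoRanking.asymm {R : X → X → Prop} (hR : ProtoRanking R) {x y : X} (hxy : R x y) :
    ¬ R y x :=
  fun hyx => hR.1 x (hR.2 x y x hxy hyx)

lemma Ranking.protoRanking {R : X → X → Prop} (hR : Ranking R) : ProtoRanking R :=
  ⟨hR.1, hR.2.1⟩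

lemma Ranking.flip {R : X → X → Prop} (hR : Ranking R) : Ranking (flip R) :=
  ⟨hR.1, fun x y z hxy hyz => hR.2.1 z y x hyz hxy, fun x y hne => (hR.2.2 x y hne).symm⟩

lemma ProtoRanking.transGen_adjacent [Finite X] {R : X → X → Prop} (hR : ProtoRanking R)
    {x y : X} (hxy : R x y) : TransGen (Adjacent R) x y := by
  induction hn : {z | R x z ∧ R z y}.ncard using Nat.strong_induction_on generalizing x y with
  | _ n ih =>
    by_cases hz : ∃ z, R x z ∧ R z y
    · obtain ⟨z, hxz, hzy⟩ := hz
      have hz_mem : z ∈ {z | R x z ∧ R z y} := ⟨hxz, hzy⟩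
      have hleft : {w | R x w ∧ R w z} ⊂ {w | R x w ∧ R w y} :=
        ⟨fun w hw => ⟨hw.1, hR.2 w z y hw.2 hzy⟩, fun h => hR.1 z (h hz_mem).2⟩
      have hright : {w | R z w ∧ R w y} ⊂ {w | R x w ∧ R w y} :=
        ⟨fun w hw => ⟨hR.2 x z w hxz hw.1, hw.2⟩, fun h => hR.1 z (h hz_mem).1⟩
      exact (ih _ (hn ▸ Set.ncard_lt_ncard hleft) hxz rfl).trans
        (ih _ (hn ▸ Set.ncard_lt_ncard hright) hzy rfl)
    · exact TransGen.single ⟨hxy, hz⟩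

lemma Ranking.eq_of_feasible [Finite X] {W R : X → X → Prop} (hW : Tournament W)
    (htrans : ∀ a b c : X, W a b → W b c → W a c) (hR : Ranking R) (hf : Feasible W R) :
    R = W := by
  have : IsTrans X W := ⟨htrans⟩
  refine eq_of_le_of_total_of_asymm hR.2.2 hW.2 fun x y hxy => ?_
  exact transGen_minimal (r := Adjacent R) hf x y (hR.protoRanking.transGen_adjacent hxy)

def swapAdjacent (R : X → X → Prop) (x y : X) : X → X → Prop :=
  fun a b => (R a b ∧ ¬ (a = x ∧ b = y)) ∨ (a = y ∧ b = x)

lemma Ranking.swapAdjacent {R : X → X → Prop} (hR : Ranking R) {x y : X}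
    (hxy : Adjacent R x y) : Ranking (swapAdjacent R x y) := by
  obtain ⟨hirr, htr, htot⟩ := hR
  obtain ⟨hxy, hbetween⟩ := hxy
  unfold _root_.swapAdjacent
  -- transitivity survives because no element lies strictly between `x` and `y`
  refine ⟨?_, ?_, ?_⟩ <;> grind

lemma exists_feasible_efficient [Finite X] {W succ : X → X → Prop} (hW : Tournament W)
    (hsucc : Ranking succ) : ∃ R, Ranking R ∧ Feasible W R ∧ Efficient succ W R := by
  obtain ⟨R, ⟨hR, heff⟩, hmin⟩ :=
    (measure fun R : X → X → Prop => {p : X × X | R p.1 p.2 ∧ W p.2 p.1}.ncard).wf.has_min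
      {R | Ranking R ∧ Efficient succ W R} ⟨succ, hsucc, fun _ _ h _ => h⟩
  refine ⟨R, hR, fun x y hxy => ?_, heff⟩
  by_contra hnot
  have hyx : W y x := (hW.1 x y fun h => hR.1 x (h ▸ hxy.1)).resolve_left hnot
  refine hmin (swapAdjacent R x y) ⟨hR.swapAdjacent hxy, ?_⟩ (Set.ncard_lt_ncard ?_)
  · intro a b hab hW_ab
    exact Or.inl ⟨heff a b hab hW_ab, by rintro ⟨rfl, rfl⟩; exact hnot hW_ab⟩
  · refine ⟨?_, fun h => ?_⟩
    · rintro ⟨a, b⟩ ⟨(⟨hab, -⟩ | ⟨rfl, rfl⟩), hba⟩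
      · exact ⟨hab, hba⟩
      · exact absurd hba hnot
    · obtain ⟨(⟨-, hne⟩ | ⟨hxy_eq, -⟩), -⟩ := h (a := (x, y)) ⟨hxy.1, hyx⟩
      · exact hne ⟨rfl, rfl⟩
      · exact hR.1 y ((hxy_eq : x = y) ▸ hxy.1)

lemma moreAligned_of_efficient {W succ R R' : X → X → Prop} (hW : Tournament W)
    (hR' : Ranking R') (heff : Efficient succ W R) (heff' : Efficient (flip succ) W R') :
    MoreAligned succ R R' := by
  intro x y hxy hR'xy
  by_cases hWxy : W x y
  · exact heff x y hxy hWxy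
  · have hne : x ≠ y := by rintro rfl; exact hR'.1 x hR'xy
    have hR'yx := heff' y x hxy ((hW.1 x y hne).resolve_left hWxy)
    exact absurd hR'yx (hR'.protoRanking.asymm hR'xy)

lemma le_of_efficient_of_efficient_flip {W succ R : X → X → Prop} (hW : Tournament W)
    (hsucc : Ranking succ) (heff : Efficient succ W R) (heff' : Efficient (flip succ) W R)
    (x y : X) (hxy : W x y) : R x y := by
  have hne : x ≠ y := by rintro rfl; exact hW.2 x x hxy hxy
  exact (hsucc.2.2 x y hne).elim (heff x y · hxy) (heff' x y · hxy)

theorem stmt14_general [Fintype X] (W : X → X → Prop) (hW : Tournament W) :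
    (¬ ∀ a b c : X, W a b → W b c → W a c) ↔
      ∀ succ : X → X → Prop, Ranking succ →
        ∃ R R' : X → X → Prop, Ranking R ∧ Ranking R' ∧
          Feasible W R ∧ Feasible W R' ∧ R ≠ R' ∧ MoreAligned succ R R' := by
  constructor
  · intro hintrans succ hsucc
    obtain ⟨R, hR, hfR, heff⟩ := exists_feasible_efficient hW hsucc
    obtain ⟨R', hR', hfR', heff'⟩ := exists_feasible_efficient hW hsucc.flip
    refine ⟨R, R', hR, hR', hfR, hfR', ?_, moreAligned_of_efficient hW hR' heff heff'⟩
    rintro rfl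
    have hWR : W = R := eq_of_le_of_total_of_asymm hW.1 (fun _ _ => hR.protoRanking.asymm)
      (le_of_efficient_of_efficient_flip hW hsucc heff heff')
    exact hintrans (hWR ▸ hR.2.1)
  · intro hfeas htrans
    have hWrank : Ranking W := ⟨fun x h => hW.2 x x h h, htrans, hW.1⟩
    obtain ⟨R, R', hR, hR', hfR, hfR', hne, -⟩ := hfeas W hWrank
    exact hne ((hR.eq_of_feasible hW htrans hfR).trans (hR'.eq_of_feasible hW htrans hfR').symm)

/-- The chair benefits from agenda-setting (for some/every preference) iff W is intransitive. -/
theorem stmt14 [Fintype X] (W : X → X → Prop) (hW : Tournament W)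
    (hcard : 3 ≤ Fintype.card X) :
    (¬ ∀ a b c : X, W a b → W b c → W a c) ↔
      ∀ succ : X → X → Prop, Ranking succ →
        ∃ R R' : X → X → Prop, Ranking R ∧ Ranking R' ∧
          Feasible W R ∧ Feasible W R' ∧ R ≠ R' ∧ MoreAligned succ R R' :=
  stmt14_general W hW
end

section
/- Let W be a tournament on a finite set X that is not transitive, and ≻ a ranking. Let R be a W-efficient ranking (x ≻ y and x W y imply x R y) and R' a W-anti-efficient ranking (y ≻ x and x W y imply x R' y). Then R ≠ R', and R is more aligned with ≻ than R'. -/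
variable {X : Type*}

/-- For intransitive W, an efficient ranking strictly improves on an anti-efficient one. -/
theorem stmt16 [Fintype X] (W succ R R' : X → X → Prop)
    (hW : Tournament W) (hnt : ∃ x y z : X, W x y ∧ W y z ∧ W z x)
    (hsucc : Ranking succ) (hR : Ranking R) (hR' : Ranking R')
    (hEff : ∀ x y : X, succ x y → W x y → R x y)
    (hAnti : ∀ x y : X, succ y x → W x y → R' x y) :
    R ≠ R' ∧ MoreAligned succ R R' := by
  obtain ⟨hsi, hst, hstot⟩ := hsucc
  obtain ⟨hRi, hRt, hRtot⟩ := hR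
  obtain ⟨hR'i, hR't, hR'tot⟩ := hR'
  have hWa := hW.2
  -- key lemma: given a W-cycle a→b→c→a with a succ-maximal, find a witness pair
  have key : ∀ a b c : X, W a b → W b c → W c a → succ a b → succ a c →
      ∃ p q : X, R p q ∧ R' q p := by
    intro a b c hab hbc hca sab sac
    have hbc' : b ≠ c := fun h => hWa b c hbc (h ▸ hbc)
    rcases hstot b c hbc' with sbc | scb
    · exact ⟨a, c, hRt a b c (hEff a b sab hab) (hEff b c sbc hbc),
        hAnti c a sac hca⟩
    · exact ⟨a, b, hEff a b sab hab,
        hR't b c a (hAnti b c scb hbc) (hAnti c a sac hca)⟩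
  obtain ⟨x, y, z, hxy, hyz, hzx⟩ := hnt
  have hxy' : x ≠ y := fun h => hWa x y hxy (h ▸ hxy)
  have hzx' : z ≠ x := fun h => hWa z x hzx (h ▸ hzx)
  have hwit : ∃ p q : X, R p q ∧ R' q p := by
    rcases hstot x y hxy' with sxy | syx
    · rcases hstot x z (Ne.symm hzx') with sxz | szx
      · exact key x y z hxy hyz hzx sxy sxz
      · exact key z x y hzx hxy hyz szx (hst z x y szx sxy)
    · have hyz' : y ≠ z := fun h => hWa y z hyz (h ▸ hyz)
      rcases hstot y z hyz' with syz | szy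
      · exact key y z x hyz hzx hxy syz syx
      · exact key z x y hzx hxy hyz (hst z y x szy syx) szy
  obtain ⟨p, q, hpq, hqp⟩ := hwit
  constructor
  · intro h
    subst h
    exact hR'i p (hR't p q p hpq hqp)
  · intro a b sab h'ab
    have hab' : a ≠ b := fun h => hsi a (h ▸ sab)
    rcases hW.1 a b hab' with wab | wba
    · exact hEff a b sab wab
    · exact absurd (hR't a b a h'ab (hAnti b a sab wba)) (hR'i a)
end

section
/- McGarvey's theorem: for every tournament W on a finite set X, there exist an odd number I and rankings V_1, ..., V_I on X such that for all distinct x,y: x W y if and only if x V_i y for a strict majority of indices i ∈ {1,...,I}. -/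
variable {X : Type*}

attribute [local instance] Classical.propDecidable

noncomputable def mgR1 (e : X → ℕ) (x y a : X) : ℕ :=
  if a = x then 0 else if a = y then 1 else e a + 2

noncomputable def mgR2 (n : ℕ) (e : X → ℕ) (x y a : X) : ℕ :=
  if a = x then n else if a = y then n + 1 else n - 1 - e a

def mgV1 (e : X → ℕ) (x y : X) : X → X → Prop :=
  fun a b => mgR1 e x y a < mgR1 e x y b

def mgV2 (n : ℕ) (e : X → ℕ) (x y : X) : X → X → Prop :=
  fun a b => mgR2 n e x y a < mgR2 n e x y b

theorem mgRanking_of_rank (r : X → ℕ) (h : ∀ a b : X, a ≠ b → r a ≠ r b) :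
    Ranking (fun a b => r a < r b) :=
  ⟨fun _ => lt_irrefl _, fun _ _ _ => lt_trans, fun a b hab => (h a b hab).lt_or_gt⟩

theorem mgV1_ranking (e : X → ℕ) (he : ∀ a b : X, e a = e b → a = b)
    (x y : X) (hxy : x ≠ y) : Ranking (mgV1 e x y) := by
  apply mgRanking_of_rank
  intro a b hab
  have hab' : e a ≠ e b := fun h => hab (he a b h)
  simp only [mgR1]
  split_ifs <;> subst_vars <;> first | omega | simp_all | (simp_all; omega)

theorem mgV2_ranking (n : ℕ) (e : X → ℕ) (he : ∀ a b : X, e a = e b → a = b)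
    (hlt : ∀ a : X, e a < n) (x y : X) (hxy : x ≠ y) : Ranking (mgV2 n e x y) := by
  apply mgRanking_of_rank
  intro a b hab
  have hab' : e a ≠ e b := fun h => hab (he a b h)
  have := hlt a
  have := hlt b
  simp only [mgR2]
  split_ifs <;> subst_vars <;> first | omega | simp_all | (simp_all; omega)

theorem mgKey (n : ℕ) (e : X → ℕ) (he : ∀ a b : X, e a = e b → a = b)
    (hlt : ∀ a : X, e a < n) (x y a b : X) (hxy : x ≠ y) (hab : a ≠ b) :
    ((if mgV1 e x y a b then 1 else 0) + (if mgV2 n e x y a b then 1 else 0) : ℕ)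
      = if (x, y) = (a, b) then 2 else if (x, y) = (b, a) then 0 else 1 := by
  have hab' : e a ≠ e b := fun h => hab (he a b h)
  have := hlt a
  have := hlt b
  have := hlt x
  have := hlt y
  clear he hlt
  simp only [mgV1, mgV2, mgR1, mgR2, Prod.mk.injEq]
  split_ifs <;> subst_vars <;> first | omega | tauto | (simp_all; omega)

/-- McGarvey's theorem: every tournament is the majority will of an odd profile of rankings. -/
theorem stmt17 [Fintype X] (W : X → X → Prop) (hW : Tournament W) :
    ∃ I : ℕ, Odd I ∧ ∃ V : Fin I → (X → X → Prop),
      (∀ i : Fin I, Ranking (V i)) ∧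
      ∀ x y : X, x ≠ y → (W x y ↔ 2 * Nat.card {i : Fin I // V i x y} > I) := by
  obtain ⟨htot, hasym⟩ := hW
  set n := Fintype.card X with hn
  set e : X → ℕ := fun x => ((Fintype.equivFin X) x : ℕ) with he
  have he_inj : ∀ a b : X, e a = e b → a = b := by
    intro a b h
    exact (Fintype.equivFin X).injective (Fin.val_injective h)
  have he_lt : ∀ a : X, e a < n := fun a => ((Fintype.equivFin X) a).2
  set S : Finset (X × X) := Finset.univ.filter (fun p => W p.1 p.2) with hS
  set m := S.card with hm
  have hmemS : ∀ p : X × X, p ∈ S ↔ W p.1 p.2 := by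
    intro p; simp [hS]
  have hWne : ∀ x y : X, W x y → x ≠ y := by
    intro x y h hq
    exact hasym x x (hq ▸ h) (hq ▸ h)
  have hrankL : Ranking (fun a b => e a < e b) := by
    apply mgRanking_of_rank
    intro a b hab
    exact fun h => hab (he_inj a b h)
  -- index type
  let J := Option (↥S × Bool)
  have hJ : Fintype.card J = 2 * m + 1 := by
    simp only [J, Fintype.card_option, Fintype.card_prod, Fintype.card_coe, Fintype.card_bool]
    omega
  let eqv : Fin (2 * m + 1) ≃ J := (Fintype.equivFinOfCardEq hJ).symm
  let V' : J → X → X → Prop := fun j =>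
    match j with
    | none => (fun a b => e a < e b)
    | some (p, true) => mgV1 e p.1.1 p.1.2
    | some (p, false) => mgV2 n e p.1.1 p.1.2
  refine ⟨2 * m + 1, ⟨m, by ring⟩, fun i => V' (eqv i), ?_, ?_⟩
  · intro i
    rcases h : eqv i with _ | ⟨p, _ | _⟩ <;> simp only [V', h]
    · exact hrankL
    · exact mgV2_ranking n e he_inj he_lt p.1.1 p.1.2 (hWne p.1.1 p.1.2 ((hmemS p.1).mp p.2))
    · exact mgV1_ranking e he_inj p.1.1 p.1.2 (hWne p.1.1 p.1.2 ((hmemS p.1).mp p.2))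
  · intro a b hab
    have hcard : Nat.card {i : Fin (2 * m + 1) // V' (eqv i) a b}
        = (if e a < e b then 1 else 0)
          + ∑ p ∈ S, ((if mgV1 e p.1 p.2 a b then 1 else 0)
              + (if mgV2 n e p.1 p.2 a b then 1 else 0)) := by
      have h1 : Nat.card {i : Fin (2 * m + 1) // V' (eqv i) a b}
          = Nat.card {j : J // V' j a b} :=
        Nat.card_congr (Equiv.subtypeEquiv eqv (fun i => Iff.rfl))
      rw [h1, Nat.card_eq_fintype_card, Fintype.card_subtype, Finset.card_filter]
      rw [Fintype.sum_option]
      rw [Fintype.sum_prod_type]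
      congr 1
      · exact ite_congr rfl (fun _ => rfl) (fun _ => rfl)
      rw [← Finset.sum_attach S (fun p => (if mgV1 e p.1 p.2 a b then 1 else 0)
            + (if mgV2 n e p.1 p.2 a b then 1 else 0))]
      refine Finset.sum_congr rfl (fun p _ => ?_)
      rw [Fintype.sum_bool]
      try exact congrArg₂ (· + ·) (ite_congr rfl (fun _ => rfl) (fun _ => rfl)) (ite_congr rfl (fun _ => rfl) (fun _ => rfl))
    rw [hcard]
    rcases htot a b hab with hw | hw
    · have hmem : (a, b) ∈ S := (hmemS (a, b)).mpr hw
      have hsum : ∑ p ∈ S, ((if mgV1 e p.1 p.2 a b then 1 else 0)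
            + (if mgV2 n e p.1 p.2 a b then 1 else 0)) = 2 + (m - 1) := by
        rw [← Finset.add_sum_erase S _ hmem]
        congr 1
        · rw [mgKey n e he_inj he_lt a b a b (hWne a b hw) hab]; simp
        · rw [Finset.sum_congr rfl (fun p hp => ?_), Finset.sum_const, smul_eq_mul, mul_one,
            Finset.card_erase_of_mem hmem]
          have hpS : p ∈ S := Finset.mem_of_mem_erase hp
          have hpW : W p.1 p.2 := (hmemS p).mp hpS
          rw [mgKey n e he_inj he_lt p.1 p.2 a b (hWne p.1 p.2 hpW) hab]
          have h1 : (p.1, p.2) ≠ (a, b) := by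
            intro h; exact (Finset.ne_of_mem_erase hp) (by rw [← h])
          have h2 : (p.1, p.2) ≠ (b, a) := by
            intro h
            rw [Prod.mk.injEq] at h
            exact hasym a b hw (h.1 ▸ h.2 ▸ hpW)
          simp [h1, h2]
      have hm1 : 1 ≤ m := Finset.card_pos.mpr ⟨(a, b), hmem⟩
      rw [hsum]
      simp only [hw, true_iff]
      split_ifs <;> omega
    · have hw' : ¬ W a b := hasym b a hw
      have hmem : (b, a) ∈ S := (hmemS (b, a)).mpr hw
      have hsum : ∑ p ∈ S, ((if mgV1 e p.1 p.2 a b then 1 else 0)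
            + (if mgV2 n e p.1 p.2 a b then 1 else 0)) = 0 + (m - 1) := by
        rw [← Finset.add_sum_erase S _ hmem]
        congr 1
        · rw [mgKey n e he_inj he_lt b a a b (hWne b a hw) hab]
          have h1 : (b, a) ≠ (a, b) := by
            intro h; rw [Prod.mk.injEq] at h; exact hab h.2
          simp [h1]
        · rw [Finset.sum_congr rfl (fun p hp => ?_), Finset.sum_const, smul_eq_mul, mul_one,
            Finset.card_erase_of_mem hmem]
          have hpS : p ∈ S := Finset.mem_of_mem_erase hp
          have hpW : W p.1 p.2 := (hmemS p).mp hpS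
          rw [mgKey n e he_inj he_lt p.1 p.2 a b (hWne p.1 p.2 hpW) hab]
          have h1 : (p.1, p.2) ≠ (a, b) := by
            intro h
            rw [Prod.mk.injEq] at h
            exact hw' (h.1 ▸ h.2 ▸ hpW)
          have h2 : (p.1, p.2) ≠ (b, a) := by
            intro h; exact (Finset.ne_of_mem_erase hp) (by rw [← h])
          simp [h1, h2]
      have hm1 : 1 ≤ m := Finset.card_pos.mpr ⟨(b, a), hmem⟩
      have hd : (if e a < e b then 1 else 0 : ℕ) ≤ 1 := by split_ifs <;> omega
      rw [hsum]
      simp only [hw', false_iff]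
      omega
end

section
/- Let W be a tournament on X and let R be a W-feasible ranking. If y R x, then there is a W-directed path y = z_1 W z_2 W ... W z_N = x along R-adjacent elements. -/
variable {X : Type*}

lemma exists_min_aux (R : X → X → Prop) (hirr : ∀ x : X, ¬ R x x)
    (htr : ∀ x y z : X, R x y → R y z → R x z)
    (S : Finset X) : S.Nonempty → ∃ z ∈ S, ∀ w ∈ S, ¬ R w z := by
  classical
  induction S using Finset.induction_on with
  | empty => exact fun hS => absurd hS (by simp)
  | @insert a S ha ih =>
    intro _
    rcases S.eq_empty_or_nonempty with rfl | hne
    · exact ⟨a, by simp, by simp [hirr]⟩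
    · obtain ⟨z, hzS, hz⟩ := ih hne
      by_cases haz : R a z
      · refine ⟨a, Finset.mem_insert_self _ _, ?_⟩
        intro w hw hwa
        rcases Finset.mem_insert.mp hw with rfl | hw
        · exact hirr _ hwa
        · exact hz w hw (htr _ _ _ hwa haz)
      · refine ⟨z, Finset.mem_insert_of_mem hzS, ?_⟩
        intro w hw hwz
        rcases Finset.mem_insert.mp hw with rfl | hw
        · exact haz hwz
        · exact hz w hw hwz

/-- In a feasible ranking, any pair y R x is linked by a W-directed path along R-adjacent elements. -/
theorem stmt18 [Fintype X] (W R : X → X → Prop)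
    (hW : Tournament W) (hR : Ranking R) (hfeas : Feasible W R)
    (x y : X) (hyx : R y x) :
    ∃ (N : ℕ) (zseq : Fin (N + 1) → X), zseq 0 = y ∧ zseq (Fin.last N) = x ∧
      ∀ i : Fin N, R (zseq i.castSucc) (zseq i.succ) ∧
        Adjacent R (zseq i.castSucc) (zseq i.succ) ∧
        W (zseq i.castSucc) (zseq i.succ) := by
  classical
  obtain ⟨hirr, htr, htot⟩ := hR
  suffices h : ∀ n (y : X), (Finset.univ.filter fun w => R y w).card ≤ n → R y x →
      ∃ (N : ℕ) (zseq : Fin (N + 1) → X), zseq 0 = y ∧ zseq (Fin.last N) = x ∧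
        ∀ i : Fin N, R (zseq i.castSucc) (zseq i.succ) ∧
          Adjacent R (zseq i.castSucc) (zseq i.succ) ∧
          W (zseq i.castSucc) (zseq i.succ) by
    exact h _ y le_rfl hyx
  intro n
  induction n with
  | zero =>
    intro y hcard hyx
    exfalso
    have : x ∈ Finset.univ.filter fun w => R y w := by simp [hyx]
    have := Finset.card_pos.mpr ⟨x, this⟩
    omega
  | succ n ih =>
    intro y hcard hyx
    set S := Finset.univ.filter fun w => R y w with hSdef
    obtain ⟨z, hzS, hzmin⟩ := exists_min_aux R hirr htr S ⟨x, by simp [hSdef, hyx]⟩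
    have hyz : R y z := by simpa [hSdef] using hzS
    have hadj : Adjacent R y z := by
      refine ⟨hyz, ?_⟩
      rintro ⟨w, hyw, hwz⟩
      exact hzmin w (by simp [hSdef, hyw]) hwz
    have hWyz : W y z := hfeas _ _ hadj
    by_cases hzx : z = x
    · subst hzx
      refine ⟨1, ![y, z], rfl, rfl, ?_⟩
      intro i
      fin_cases i
      exact ⟨hyz, hadj, hWyz⟩
    · have hzx' : R z x := by
        rcases htot z x hzx with h | h
        · exact h
        · exact (hzmin x (by simp [hSdef, hyx]) h).elim
      have hsub : (Finset.univ.filter fun w => R z w) ⊂ S := by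
        refine Finset.ssubset_iff_of_subset ?_ |>.mpr ⟨z, hzS, by simp [hirr]⟩
        intro w hw
        simp only [hSdef, Finset.mem_filter, Finset.mem_univ, true_and] at hw ⊢
        exact htr _ _ _ hyz hw
      have hlt : (Finset.univ.filter fun w => R z w).card ≤ n := by
        have := Finset.card_lt_card hsub
        omega
      obtain ⟨N, zseq, hz0, hzl, hstep⟩ := ih z hlt hzx'
      refine ⟨N + 1, Fin.cons y zseq, by simp, ?_, ?_⟩
      · have : Fin.last (N + 1) = (Fin.last N).succ := rfl
        rw [this, Fin.cons_succ, hzl]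
      · intro i
        induction i using Fin.cases with
        | zero =>
          have h1 : (Fin.cons y zseq : Fin (N+2) → X) (0 : Fin (N+1)).castSucc = y := by
            simp
          have h2 : (Fin.cons y zseq : Fin (N+2) → X) (0 : Fin (N+1)).succ = z := by
            have : ((0 : Fin (N+1)).succ : Fin (N+2)) = (0 : Fin (N+1)).succ := rfl
            rw [Fin.succ_zero_eq_one]
            have : (1 : Fin (N+2)) = (0 : Fin (N+1)).succ := rfl
            rw [this, Fin.cons_succ, hz0]
          rw [h1, h2]
          exact ⟨hyz, hadj, hWyz⟩
        | succ j =>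
          have h1 : (Fin.cons y zseq : Fin (N+2) → X) j.succ.castSucc = zseq j.castSucc := by
            rw [← Fin.succ_castSucc, Fin.cons_succ]
          have h2 : (Fin.cons y zseq : Fin (N+2) → X) j.succ.succ = zseq j.succ := by
            rw [Fin.cons_succ]
          rw [h1, h2]
          exact hstep j
end

section
/- A ranking method ρ (assigning a ranking to each tournament on a finite set X) is faithful if and only if ρ(W) is W-feasible for every tournament W. Here ρ is faithful iff for every tournament W, no ranking R distinct from ρ(W) is more aligned with W than ρ(W). -/
variable {X : Type*}

open Classical in
lemma chain_lemma [Fintype X] {R Q : X → X → Prop} (hR : Ranking R)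
    (hQt : ∀ a b c, Q a b → Q b c → Q a c)
    (hadj : ∀ a b, Adjacent R a b → Q a b) :
    ∀ x y, R x y → Q x y := by
  obtain ⟨hirr, htrans, _⟩ := hR
  have main : ∀ n x y, (Finset.univ.filter (fun z => R x z ∧ R z y)).card ≤ n →
      R x y → Q x y := by
    intro n
    induction n with
    | zero =>
      intro x y hc hxy
      apply hadj
      refine ⟨hxy, ?_⟩
      rintro ⟨z, hz1, hz2⟩
      have hz : z ∈ Finset.univ.filter (fun z => R x z ∧ R z y) := by simp [hz1, hz2]
      have := Finset.card_pos.mpr ⟨z, hz⟩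
      omega
    | succ n ih =>
      intro x y hc hxy
      by_cases h : ∃ z, R x z ∧ R z y
      · obtain ⟨z, hz1, hz2⟩ := h
        have hsub1 : Finset.univ.filter (fun w => R x w ∧ R w z) ⊂
            Finset.univ.filter (fun w => R x w ∧ R w y) := by
          constructor
          · intro w hw
            simp only [Finset.mem_filter, Finset.mem_univ, true_and] at hw ⊢
            exact ⟨hw.1, htrans _ _ _ hw.2 hz2⟩
          · intro hs
            have hz : z ∈ Finset.univ.filter (fun w => R x w ∧ R w y) := by simp [hz1, hz2]
            have := hs hz
            simp only [Finset.mem_filter, Finset.mem_univ, true_and] at this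
            exact hirr z this.2
        have hsub2 : Finset.univ.filter (fun w => R z w ∧ R w y) ⊂
            Finset.univ.filter (fun w => R x w ∧ R w y) := by
          constructor
          · intro w hw
            simp only [Finset.mem_filter, Finset.mem_univ, true_and] at hw ⊢
            exact ⟨htrans _ _ _ hz1 hw.1, hw.2⟩
          · intro hs
            have hz : z ∈ Finset.univ.filter (fun w => R x w ∧ R w y) := by simp [hz1, hz2]
            have := hs hz
            simp only [Finset.mem_filter, Finset.mem_univ, true_and] at this
            exact hirr z this.1
        have c1 := Finset.card_lt_card hsub1
        have c2 := Finset.card_lt_card hsub2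
        exact hQt _ _ _ (ih x z (by omega) hz1) (ih z y (by omega) hz2)
      · exact hadj x y ⟨hxy, h⟩
  intro x y hxy
  exact main _ x y le_rfl hxy

/-- A ranking method is faithful iff its value at each tournament is feasible. -/
theorem stmt19 [Fintype X] (ρ : (X → X → Prop) → (X → X → Prop))
    (hρ : ∀ W : X → X → Prop, Tournament W → Ranking (ρ W)) :
    (∀ W : X → X → Prop, Tournament W →
        ∀ R : X → X → Prop, Ranking R → R ≠ ρ W → ¬ MoreAligned W R (ρ W)) ↔
      (∀ W : X → X → Prop, Tournament W → Feasible W (ρ W)) := by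
  constructor
  · -- faithful → feasible
    intro hfaith W hW
    obtain ⟨Wt, Wa⟩ := hW
    obtain ⟨pirr, ptrans, ptot⟩ := hρ W ⟨Wt, Wa⟩
    intro x y hadj
    by_contra hWxy
    obtain ⟨hxy, hnb⟩ := hadj
    have hxney : x ≠ y := fun h => pirr x (h ▸ hxy)
    have hWyx : W y x := (Wt x y hxney).resolve_left hWxy
    classical
    set σ : X → X := fun a => if a = x then y else if a = y then x else a with hσ
    have hσx : σ x = y := by simp [hσ]
    have hσy : σ y = x := by simp [hσ, hxney.symm]
    have hσo : ∀ a, a ≠ x → a ≠ y → σ a = a := by intro a h1 h2; simp [hσ, h1, h2]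
    have hσinv : ∀ a, σ (σ a) = a := by
      intro a
      by_cases h1 : a = x
      · rw [h1, hσx, hσy]
      · by_cases h2 : a = y
        · rw [h2, hσy, hσx]
        · rw [hσo a h1 h2, hσo a h1 h2]
    set R : X → X → Prop := fun a b => ρ W (σ a) (σ b) with hRdef
    have hRrank : Ranking R := by
      refine ⟨fun a h => pirr _ h, fun a b c h1 h2 => ptrans _ _ _ h1 h2, ?_⟩
      intro a b hab
      have : σ a ≠ σ b := fun h => hab (by rw [← hσinv a, h, hσinv b])
      exact ptot _ _ this
    have hRne : R ≠ ρ W := by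
      intro h
      have h1 : R y x := by show ρ W (σ y) (σ x); rw [hσx, hσy]; exact hxy
      rw [h] at h1
      exact pirr x (ptrans _ _ _ hxy h1)
    have hasym : ∀ a b, ρ W a b → ¬ ρ W b a := fun a b h1 h2 => pirr a (ptrans _ _ _ h1 h2)
    have hMA : MoreAligned W R (ρ W) := by
      intro a b hWab hab
      show ρ W (σ a) (σ b)
      have hane : a ≠ b := fun h => pirr a (h ▸ hab)
      by_cases ha1 : a = x
      · by_cases hb1 : b = y
        · rw [ha1] at hWab; rw [hb1] at hWab; exact absurd hWab hWxy
        · have hb2 : b ≠ x := fun h => hane (ha1.trans h.symm)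
          rw [ha1, hσx, hσo b hb2 hb1]
          rcases ptot y b (fun h => hb1 h.symm) with h | h
          · exact h
          · rw [ha1] at hab; exact absurd ⟨b, hab, h⟩ hnb
      · by_cases ha2 : a = y
        · by_cases hb1 : b = x
          · rw [ha2, hb1] at hab; exact absurd hab (hasym x y hxy)
          · have hb2 : b ≠ y := fun h => hane (ha2.trans h.symm)
            rw [ha2, hσy, hσo b hb1 hb2]
            rw [ha2] at hab
            exact ptrans _ _ _ hxy hab
        · by_cases hb1 : b = x
          · rw [hb1, hσx, hσo a ha1 ha2]
            rw [hb1] at hab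
            exact ptrans _ _ _ hab hxy
          · by_cases hb2 : b = y
            · rw [hb2, hσy, hσo a ha1 ha2]
              rw [hb2] at hab
              rcases ptot a x ha1 with h | h
              · exact h
              · exact absurd ⟨a, h, hab⟩ hnb
            · rw [hσo a ha1 ha2, hσo b hb1 hb2]; exact hab
    exact hfaith W ⟨Wt, Wa⟩ R hRrank hRne hMA
  · -- feasible → faithful
    intro hfeas W hW R hR hne hMA
    obtain ⟨rirr, rtrans, rtot⟩ := hR
    obtain ⟨pirr, ptrans, ptot⟩ := hρ W hW
    have key : ∀ a b, ρ W a b → R a b := by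
      apply chain_lemma (hρ W hW) rtrans
      intro a b hadj
      exact hMA a b (hfeas W hW a b hadj) hadj.1
    apply hne
    funext a b
    apply propext
    constructor
    · intro hab
      have hane : a ≠ b := fun h => rirr a (h ▸ hab)
      rcases ptot a b hane with h | h
      · exact h
      · exact absurd (rtrans _ _ _ hab (key _ _ h)) (rirr a)
    · exact key a b
end
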